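/- arXiv:2401.14632 — 6 statements merged into one kernel-verified Lean document; each statement's English description precedes it below -/
import Mathlib

section
/- Let λ and μ be partitions of d. Then there exists a semistandard Young tableau of shape λ and weight μ (equivalently, the Kostka number K_{λ,μ} is nonzero) if and only if μ ⊴ λ. -/
/-- A partition, encoded as a weakly decreasing, eventually zero sequence of
nonnegative integers (0-indexed: part `i+1` of the partition is `l i`). -/
def IsPartition (l : ℕ → ℕ) : Prop :=
  Antitone l ∧ ∃ N, ∀ m, N ≤ m → l m = 0

/-- `l` is a partition of `d`: weakly decreasing, eventually zero, parts summing to `d`. -/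
def IsPartitionOf (d : ℕ) (l : ℕ → ℕ) : Prop :=
  Antitone l ∧ ∃ N, (∀ m, N ≤ m → l m = 0) ∧ ∑ i ∈ Finset.range N, l i = d

/-- Dominance order: `Dominates lam mu` means `mu ⊴ lam`, i.e. every partial sum of `mu`
is at most the corresponding partial sum of `lam`. -/
def Dominates (lam mu : ℕ → ℕ) : Prop :=
  ∀ i, ∑ t ∈ Finset.range i, mu t ≤ ∑ t ∈ Finset.range i, lam t

/-- The cell in row `i`, column `j` (0-indexed) belongs to the Young diagram of `l`
iff `j < l i`.  The hook length of such a cell: 1 + #cells strictly to its right in its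
row + #cells strictly above it in its column; for `j < l i` this equals
`(l i - j) + #{i' > i | j < l i'}`. -/
noncomputable def hook (l : ℕ → ℕ) (i j : ℕ) : ℕ :=
  (l i - j) + Nat.card {i' : ℕ // i < i' ∧ j < l i'}

/-- `l` is a `(k+1)`-core: a partition none of whose cells has hook length `k+1`. -/
def IsCore (k : ℕ) (l : ℕ → ℕ) : Prop :=
  IsPartition l ∧ ∀ i j, j < l i → hook l i j ≠ k + 1

/-- The `(k+1)`-residue of the cell in row `i`, column `j`: `(j - i) mod (k+1)`. -/
def residue (k i j : ℕ) : ZMod (k + 1) :=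
  (j : ZMod (k + 1)) - (i : ZMod (k + 1))

/-- `(i,j)` is a top cell of `l`: it lies in the diagram but the cell above it does not. -/
def IsTopCell (l : ℕ → ℕ) (i j : ℕ) : Prop :=
  j < l i ∧ l (i + 1) ≤ j

/-- `(i,j)` is a removable corner of `l`: a cell with no cell above it nor to its right. -/
def IsRemovableCorner (l : ℕ → ℕ) (i j : ℕ) : Prop :=
  j + 1 = l i ∧ l (i + 1) ≤ j

/-- For top cells `c' = (i',j')` and `c = (i,j)` with `c` weakly southeast of `c'`,
`hBetween l i' j' i j` is `#{x | i ≤ x ≤ i', (x,j') ∈ l} + #{y | j'+1 ≤ y ≤ j, (i,y) ∈ l}`. -/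
def hBetween (l : ℕ → ℕ) (i' j' i j : ℕ) : ℕ :=
  ((Finset.Icc i i').filter (fun x => j' < l x)).card +
    ((Finset.Icc (j' + 1) j).filter (fun y => y < l i)).card

/-- `pMap k l i` is the number of cells in row `i` of `l` with hook length at most `k`;
the sequence `pMap k l` is `p(l)`. -/
noncomputable def pMap (k : ℕ) (l : ℕ → ℕ) (i : ℕ) : ℕ :=
  ((Finset.range (l i)).filter (fun j => hook l i j ≤ k)).card

/-- A semistandard Young tableau of shape `l`, with 0-indexed entries (entry `m`
represents the letter `m+1`): rows weakly increase, columns strictly increase,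
and (as a normalization) entries outside the diagram are `0`. -/
structure SSYT (l : ℕ → ℕ) where
  entry : ℕ → ℕ → ℕ
  rowWeak : ∀ i j, j + 1 < l i → entry i j ≤ entry i (j + 1)
  colStrict : ∀ i j, j < l (i + 1) → entry i j < entry (i + 1) j
  zero_outside : ∀ i j, l i ≤ j → entry i j = 0

/-- The weight of an SSYT: `T.weight m` is the number of cells of the diagram
whose entry is `m`. -/
noncomputable def SSYT.weight {l : ℕ → ℕ} (T : SSYT l) (m : ℕ) : ℕ :=
  Nat.card {p : ℕ × ℕ // p.2 < l p.1 ∧ T.entry p.1 p.2 = m}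

/-- The `k`-weight of an SSYT: `T.kweight k m` is the number of distinct
`(k+1)`-residues among the cells whose entry is `m`. -/
noncomputable def SSYT.kweight {l : ℕ → ℕ} (T : SSYT l) (k m : ℕ) : ℕ :=
  Nat.card {r : ZMod (k + 1) // ∃ i j, j < l i ∧ T.entry i j = m ∧ residue k i j = r}

/-- The coefficient of the monomial with exponent vector `α` in `f`. -/
noncomputable def coeffOf {n : ℕ} (f : MvPolynomial (Fin n) ℝ) (α : Fin n → ℕ) : ℝ :=
  f.coeff (Finsupp.equivFunOnFinite.symm α)

/-- `f` is the Schur polynomial of shape `l` in `x_1, …, x_n`: the coefficient of `x^α`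
is the number of SSYT of shape `l` with entries among the `n` letters whose weight is `α`. -/
def IsSchurPoly (n : ℕ) (l : ℕ → ℕ) (f : MvPolynomial (Fin n) ℝ) : Prop :=
  ∀ α : Fin n → ℕ,
    coeffOf f α =
      (Nat.card {T : SSYT l // (∀ i j, j < l i → T.entry i j < n) ∧
        ∀ m : Fin n, T.weight (m : ℕ) = α m} : ℝ)

/-- `f` is the dual `k`-Schur polynomial of shape the `(k+1)`-core `l` in `x_1, …, x_n`:
the coefficient of `x^α` is the number of SSYT of shape `l` with entries among the `n`
letters whose `k`-weight is `α`. -/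
def IsDualKSchurPoly (n k : ℕ) (l : ℕ → ℕ) (f : MvPolynomial (Fin n) ℝ) : Prop :=
  ∀ α : Fin n → ℕ,
    coeffOf f α =
      (Nat.card {T : SSYT l // (∀ i j, j < l i → T.entry i j < n) ∧
        ∀ m : Fin n, T.kweight k (m : ℕ) = α m} : ℝ)

/-- The Newton polytope of `f`: the convex hull in `ℝ^n` of the exponent vectors of the
monomials of `f` with nonzero coefficient. -/
noncomputable def newtonPolytope {n : ℕ} (f : MvPolynomial (Fin n) ℝ) : Set (Fin n → ℝ) :=
  convexHull ℝ {x | ∃ α : Fin n → ℕ, coeffOf f α ≠ 0 ∧ x = fun i => (α i : ℝ)}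

/-- `f` has saturated Newton polytope: the lattice points of `Newton(f)` are exactly
the exponent vectors of `f`. -/
def HasSNP {n : ℕ} (f : MvPolynomial (Fin n) ℝ) : Prop :=
  ∀ x : Fin n → ℝ,
    (x ∈ newtonPolytope f ∧ ∀ i, ∃ m : ℤ, x i = (m : ℝ)) ↔
      ∃ α : Fin n → ℕ, coeffOf f α ≠ 0 ∧ x = fun i => (α i : ℝ)

/-- The `λ`-permutahedron in `ℝ^n`: the convex hull of all coordinate permutations of
`(l 0, …, l (n-1))`. -/
noncomputable def permutahedron (n : ℕ) (l : ℕ → ℕ) : Set (Fin n → ℝ) :=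
  convexHull ℝ {v : Fin n → ℝ | ∃ σ : Equiv.Perm (Fin n), ∀ i, v i = (l (σ i).val : ℝ)}

/-- A subset `J ⊆ ℕ^n` is M-convex. -/
def MConvex {n : ℕ} (J : Set (Fin n → ℕ)) : Prop :=
  ∀ α ∈ J, ∀ β ∈ J, ∀ i : Fin n, β i < α i →
    ∃ j : Fin n, α j < β j ∧
      (fun t => if t = i then α t - 1 else if t = j then α t + 1 else α t) ∈ J

/-- `sort(α) ⊴ lam`: some weakly decreasing rearrangement of `α` (padded with zeros)
is dominated by `lam`. -/
def SortDominatedBy (n : ℕ) (α : Fin n → ℕ) (lam : ℕ → ℕ) : Prop :=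
  ∃ β : ℕ → ℕ, Antitone β ∧ (∀ m, n ≤ m → β m = 0) ∧
    (∃ σ : Equiv.Perm (Fin n), ∀ i : Fin n, β i = α (σ i)) ∧
    Dominates lam β

/-!
Column strictness forces every entry in row `r` of a tableau to be at least `r`, so the
`μ_1 + ⋯ + μ_q` entries at most `q` all lie in the first `q` rows: hence `μ ⊴ λ`.

Conversely, the superstandard tableau (row `r` filled with `r`) has weight `λ`. If `μ ◁ λ`,
moving one unit from a part `μ_j` up to an earlier part `μ_i` gives a partition `ν` with
`μ ◁ ν ⊴ λ` and `ν_{i+1} < ν_i`, so by induction some tableau has weight `ν`. As `ν_{i+1} < ν_i`,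
some entry `i` has no `i + 1` below it; raising the rightmost such entry to `i + 1` keeps the
tableau semistandard and moves one unit of weight from `i` to `i + 1`. Doing this along
`i, i + 1, …, j` turns the weight `ν` into `μ`.
-/

open Finset

def moveUnit (w : ℕ → ℕ) (i j : ℕ) : ℕ → ℕ :=
  w - Pi.single i 1 + Pi.single j 1

theorem moveUnit_apply (w : ℕ → ℕ) (i j t : ℕ) :
    moveUnit w i j t = w t - (if t = i then 1 else 0) + (if t = j then 1 else 0) := by
  simp only [moveUnit, Pi.add_apply, Pi.sub_apply, Pi.single_apply]

theorem moveUnit_moveUnit (w : ℕ → ℕ) (i j k : ℕ) :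
    moveUnit (moveUnit w i j) j k = moveUnit w i k := by
  funext t
  simp only [moveUnit_apply]
  split_ifs <;> omega

theorem moveUnit_self {w : ℕ → ℕ} {i : ℕ} (hi : 0 < w i) : moveUnit w i i = w := by
  funext t
  simp only [moveUnit_apply]
  split_ifs <;> subst_vars <;> omega

theorem sum_range_moveUnit {w : ℕ → ℕ} {i : ℕ} (hi : 0 < w i) (j q : ℕ) :
    ∑ t ∈ range q, moveUnit w i j t + (if i < q then 1 else 0) =
      ∑ t ∈ range q, w t + (if j < q then 1 else 0) := by
  have hpoint (t : ℕ) :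
      moveUnit w i j t + (Pi.single i 1 : ℕ → ℕ) t = w t + (Pi.single j 1 : ℕ → ℕ) t := by
    simp only [moveUnit_apply, Pi.single_apply]
    split_ifs <;> subst_vars <;> omega
  have := sum_congr rfl fun t (_ : t ∈ range q) => hpoint t
  simpa only [sum_add_distrib, sum_pi_single', mem_range] using this

theorem antitone_moveUnit {mu : ℕ → ℕ} (hmu : Antitone mu) {i j : ℕ} (hij : i < j)
    (hj : mu (j + 1) < mu j) (hi : ∀ t, t + 1 = i → mu i < mu t) :
    Antitone (moveUnit mu j i) := by
  refine antitone_nat_of_succ_le fun t => ?_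
  have hstep : mu (t + 1) ≤ mu t := hmu (Nat.le_succ t)
  have hat_i : t + 1 = i → mu (t + 1) < mu t := fun ht => ht ▸ hi t ht
  have hat_j : t = j → mu (t + 1) < mu t := fun ht => ht ▸ hj
  simp only [moveUnit_apply]
  split_ifs <;> omega

namespace IsPartitionOf

variable {d : ℕ} {mu : ℕ → ℕ}

theorem isPartition (h : IsPartitionOf d mu) : IsPartition mu :=
  ⟨h.1, h.2.imp fun _ hN => hN.1⟩

theorem sum_range_of_eq_zero (h : IsPartitionOf d mu) {R : ℕ}
    (hR : ∀ t, R ≤ t → mu t = 0) : ∑ t ∈ range R, mu t = d := by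
  obtain ⟨-, N, hN, hsum⟩ := h
  have hzero {A B : ℕ} (hA : ∀ t, A ≤ t → mu t = 0) (hAB : A ≤ B) :
      ∑ t ∈ range A, mu t = ∑ t ∈ range B, mu t :=
    sum_subset (range_subset_range.2 hAB) fun t _ ht => hA t (by simpa using ht)
  rcases le_total R N with hRN | hNR
  · rw [hzero hR hRN, hsum]
  · rw [← hzero hN hNR, hsum]

theorem sum_range_le (h : IsPartitionOf d mu) (R : ℕ) : ∑ t ∈ range R, mu t ≤ d := by
  obtain ⟨N, hN, -⟩ := h.2
  calc ∑ t ∈ range R, mu t ≤ ∑ t ∈ range (R + N), mu t :=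
        sum_le_sum_of_subset (range_subset_range.2 (by omega))
    _ = d := h.sum_range_of_eq_zero fun t ht => hN t (by omega)

theorem eq_zero_of_le (h : IsPartitionOf d mu) {t : ℕ} (ht : d ≤ t) : mu t = 0 := by
  by_contra hne
  have hpos : ∑ _s ∈ range (t + 1), 1 ≤ ∑ s ∈ range (t + 1), mu s :=
    sum_le_sum fun s hs =>
      (Nat.one_le_iff_ne_zero.2 hne).trans (h.1 (Nat.lt_succ_iff.1 (mem_range.1 hs)))
  have := h.sum_range_le (t + 1)
  simp only [sum_const, card_range, smul_eq_mul, mul_one] at hpos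
  omega

theorem lt_of_pos (h : IsPartitionOf d mu) {t : ℕ} (ht : 0 < mu t) : t < d :=
  not_le.1 fun hdt => ht.ne' (h.eq_zero_of_le hdt)

theorem sum_range_of_le (h : IsPartitionOf d mu) {R : ℕ} (hR : d ≤ R) :
    ∑ t ∈ range R, mu t = d :=
  h.sum_range_of_eq_zero fun _ ht => h.eq_zero_of_le (hR.trans ht)

theorem exists_lt_of_ne {lam : ℕ → ℕ} (hmu : IsPartitionOf d mu) (hlam : IsPartitionOf d lam)
    (hne : mu ≠ lam) :
    ∃ t, mu t < lam t := by
  by_contra! hge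
  refine hne (funext fun t => ?_)
  rcases lt_or_ge t d with ht | ht
  · have hsum : ∑ s ∈ range d, lam s = ∑ s ∈ range d, mu s := by
      rw [hlam.sum_range_of_le le_rfl, hmu.sum_range_of_le le_rfl]
    exact ((sum_eq_sum_iff_of_le fun s _ => hge s).1 hsum t (mem_range.2 ht)).symm
  · rw [hmu.eq_zero_of_le ht, hlam.eq_zero_of_le ht]

theorem exists_lt_succ_of_sum_lt (h : IsPartitionOf d mu) {i : ℕ}
    (hi : ∑ t ∈ range (i + 1), mu t < d) : ∃ q, i < q ∧ mu (q + 1) < mu q := by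
  by_contra! hmono
  have hmono' : Monotone fun k => mu (i + 1 + k) :=
    monotone_nat_of_le_succ fun k => hmono (i + 1 + k) (by omega)
  have hzero : ∀ t, i + 1 ≤ t → mu t = 0 := fun t ht => Nat.eq_zero_of_le_zero <|
    calc mu t ≤ mu (i + 1) := h.1 ht
      _ ≤ mu (i + 1 + d) := hmono' (Nat.zero_le d)
      _ = 0 := h.eq_zero_of_le (by omega)
  exact hi.ne (h.sum_range_of_eq_zero hzero)

theorem moveUnit_of_antitone (h : IsPartitionOf d mu) {i j : ℕ}
    (hanti : Antitone (moveUnit mu j i)) (hj : 0 < mu j) (hi : i < d) :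
    IsPartitionOf d (moveUnit mu j i) := by
  have hjd := h.lt_of_pos hj
  refine ⟨hanti, d, fun t ht => ?_, ?_⟩
  · simp only [moveUnit_apply, h.eq_zero_of_le ht]
    split_ifs <;> omega
  · have := sum_range_moveUnit hj i d
    rw [h.sum_range_of_le le_rfl] at this
    simp only [if_pos hjd, if_pos hi] at this
    omega

end IsPartitionOf

namespace Dominates

variable {d : ℕ} {lam mu : ℕ → ℕ}

theorem sum_range_lt (hdom : Dominates lam mu) (hlam : Antitone lam) {i j : ℕ}
    (hi : mu i < lam i) (hflat : ∀ q, i < q → q < j → mu q ≤ mu (q + 1)) :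
    ∀ q, i < q → q ≤ j → ∑ t ∈ range q, mu t < ∑ t ∈ range q, lam t := by
  intro q hiq
  induction q, hiq using Nat.le_induction with
  | base =>
    have := hdom i
    simp only [sum_range_succ]
    omega
  | succ q hiq ih =>
    intro hqj
    have hlt := ih (by omega)
    have hnext := hdom (q + 2)
    have hflat_q := hflat q hiq (by omega)
    have hlam_q : lam (q + 1) ≤ lam q := hlam (Nat.le_succ q)
    simp only [sum_range_succ] at hnext ⊢
    omega

theorem exists_moveUnit (hlam : IsPartitionOf d lam)
    (hmu : IsPartitionOf d mu) (hdom : Dominates lam mu) (hne : mu ≠ lam) :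
    ∃ i j, i < j ∧ j < d ∧ 0 < mu j ∧ IsPartitionOf d (moveUnit mu j i) ∧
      Dominates lam (moveUnit mu j i) ∧ moveUnit mu j i (i + 1) < moveUnit mu j i i := by
  classical
  -- `i` is the first part where `mu` falls short of `lam` and `j` the first descent of `mu`
  -- after `i`; the partial sums of `mu` stay strictly below those of `lam` in between, which
  -- keeps `moveUnit mu j i` dominated by `lam`.
  have hex := hmu.exists_lt_of_ne hlam hne
  obtain ⟨i, hi, hbefore⟩ : ∃ i, mu i < lam i ∧ ∀ t < i, lam t ≤ mu t :=
    ⟨Nat.find hex, Nat.find_spec hex, fun t ht => not_lt.1 (Nat.find_min hex ht)⟩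
  have hi_lt : ∑ t ∈ range (i + 1), mu t < ∑ t ∈ range (i + 1), lam t :=
    hdom.sum_range_lt hlam.1 hi (by omega) _ (Nat.lt_succ_self i) le_rfl
  have hdesc := hmu.exists_lt_succ_of_sum_lt (hi_lt.trans_le (hlam.sum_range_le (i + 1)))
  obtain ⟨j, ⟨hij, hj⟩, hflat⟩ : ∃ j, (i < j ∧ mu (j + 1) < mu j) ∧
      ∀ q, i < q → q < j → mu q ≤ mu (q + 1) :=
    ⟨Nat.find hdesc, Nat.find_spec hdesc, fun q hiq hq => not_lt.1 fun h =>
      Nat.find_min hdesc hq ⟨hiq, h⟩⟩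
  have hj_pos : 0 < mu j := by omega
  have hjd := hmu.lt_of_pos hj_pos
  have hsum := sum_range_moveUnit hj_pos i
  have hstrict := hdom.sum_range_lt hlam.1 hi hflat
  have hanti : Antitone (moveUnit mu j i) := antitone_moveUnit hmu.1 hij hj fun t ht =>
    calc mu i < lam i := hi
      _ ≤ lam t := hlam.1 (by omega)
      _ ≤ mu t := hbefore t (by omega)
  refine ⟨i, j, hij, hjd, hj_pos, hmu.moveUnit_of_antitone hanti hj_pos (hij.trans hjd),
    fun q => ?_, ?_⟩
  · have h1 := hsum q
    have h2 := hdom q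
    by_cases hq : i < q ∧ q ≤ j
    · have := hstrict q hq.1 hq.2
      split_ifs at h1 <;> omega
    · split_ifs at h1 <;> omega
  · have : mu (i + 1) ≤ mu i := hmu.1 (Nat.le_succ i)
    simp only [moveUnit_apply]
    split_ifs <;> omega

end Dominates

theorem sum_card_filter_eq {α : Type*} (s : Finset α) (f : α → ℕ) (q : ℕ) :
    ∑ t ∈ range q, #{p ∈ s | f p = t} = #{p ∈ s | f p < q} := by
  rw [card_eq_sum_card_fiberwise (f := f) (t := range q) fun p hp => by
    simpa using (mem_filter.1 hp).2]
  refine sum_congr rfl fun t ht => congrArg card ?_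
  ext p
  simp only [mem_filter]
  constructor
  · rintro ⟨hp, rfl⟩
    exact ⟨⟨hp, mem_range.1 ht⟩, rfl⟩
  · rintro ⟨⟨hp, -⟩, rfl⟩
    exact ⟨hp, rfl⟩

def diagram (lam : ℕ → ℕ) (N : ℕ) : Finset (ℕ × ℕ) :=
  (range N).biUnion fun r => {r} ×ˢ range (lam r)

section Diagram

variable {lam : ℕ → ℕ} {N : ℕ}

theorem mem_diagram (hN : ∀ m, N ≤ m → lam m = 0) {p : ℕ × ℕ} :
    p ∈ diagram lam N ↔ p.2 < lam p.1 := by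
  obtain ⟨r, c⟩ := p
  simp only [diagram, mem_biUnion, mem_range, mem_product, mem_singleton]
  constructor
  · rintro ⟨_, _, rfl, hc⟩
    exact hc
  · intro hc
    refine ⟨r, ?_, rfl, hc⟩
    by_contra! hr
    rw [hN r hr] at hc
    exact Nat.not_lt_zero c hc

theorem card_filter_diagram_fst_eq (hN : ∀ m, N ≤ m → lam m = 0) (r : ℕ) :
    #{p ∈ diagram lam N | p.1 = r} = lam r := by
  have : {p ∈ diagram lam N | p.1 = r} = {r} ×ˢ range (lam r) := by
    ext ⟨a, b⟩
    simp only [mem_filter, mem_diagram hN, mem_product, mem_singleton, mem_range]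
    constructor
    · rintro ⟨hb, rfl⟩
      exact ⟨rfl, hb⟩
    · rintro ⟨rfl, hb⟩
      exact ⟨hb, rfl⟩
  rw [this, card_product, card_singleton, card_range, one_mul]

end Diagram

namespace SSYT

variable {lam : ℕ → ℕ} {N : ℕ}

theorem weight_eq_card (hN : ∀ m, N ≤ m → lam m = 0) (T : SSYT lam) (m : ℕ) :
    T.weight m = #{p ∈ diagram lam N | T.entry p.1 p.2 = m} := by
  rw [SSYT.weight, ← Set.ncard_coe_finset, ← Nat.card_coe_set_eq]
  congr
  ext p
  simp [mem_diagram hN]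

theorem le_entry (hlam : Antitone lam) (T : SSYT lam) :
    ∀ r c, c < lam r → r ≤ T.entry r c
  | 0, _, _ => Nat.zero_le _
  | r + 1, c, hc => by
    have := le_entry hlam T r c (hc.trans_le (hlam (Nat.le_succ r)))
    have := T.colStrict r c hc
    omega

theorem sum_range_weight_le (hlam : IsPartition lam) (T : SSYT lam) (q : ℕ) :
    ∑ t ∈ range q, T.weight t ≤ ∑ t ∈ range q, lam t := by
  obtain ⟨hA, N, hN⟩ := hlam
  simp only [T.weight_eq_card hN, ← card_filter_diagram_fst_eq hN, sum_card_filter_eq]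
  refine card_le_card fun p hp => ?_
  simp only [mem_filter, mem_diagram hN] at hp ⊢
  exact ⟨hp.1, (T.le_entry hA p.1 p.2 hp.1).trans_lt hp.2⟩

def superstandard (hlam : Antitone lam) : SSYT lam where
  entry r c := if c < lam r then r else 0
  rowWeak r c hc := by simp [hc, (Nat.lt_succ_self c).trans hc]
  colStrict r c hc := by simp [hc, hc.trans_le (hlam (Nat.le_succ r))]
  zero_outside r c hc := by simp [not_lt.2 hc]

theorem weight_superstandard (hlam : IsPartition lam) :
    (superstandard hlam.1).weight = lam := by
  obtain ⟨N, hN⟩ := hlam.2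
  funext m
  rw [weight_eq_card hN, ← card_filter_diagram_fst_eq hN m]
  refine congrArg card (filter_congr fun p hp => ?_)
  simp [superstandard, (mem_diagram hN).1 hp]

def raise (T : SSYT lam) {r c v : ℕ} (hc : c < lam r) (hv : T.entry r c ≤ v)
    (hright : c + 1 < lam r → v ≤ T.entry r (c + 1))
    (hbelow : c < lam (r + 1) → v < T.entry (r + 1) c) : SSYT lam where
  entry a b := if a = r ∧ b = c then v else T.entry a b
  rowWeak a b hb := by
    have := T.rowWeak a b hb
    split_ifs with hab hab' hab'
    · omega
    · obtain ⟨rfl, rfl⟩ := hab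
      exact hright hb
    · obtain ⟨rfl, rfl⟩ := hab'
      exact this.trans hv
    · exact this
  colStrict a b hb := by
    have := T.colStrict a b hb
    split_ifs with hab hab' hab'
    · omega
    · obtain ⟨rfl, rfl⟩ := hab
      exact hbelow hb
    · obtain ⟨rfl, rfl⟩ := hab'
      exact this.trans_le hv
    · exact this
  zero_outside a b hb := by
    split_ifs with hab
    · obtain ⟨rfl, rfl⟩ := hab
      omega
    · exact T.zero_outside a b hb

theorem weight_raise (hN : ∀ m, N ≤ m → lam m = 0) (T : SSYT lam) {r c v : ℕ}
    (hc : c < lam r) (hv : T.entry r c ≤ v) (hright : c + 1 < lam r → v ≤ T.entry r (c + 1))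
    (hbelow : c < lam (r + 1) → v < T.entry (r + 1) c) :
    (T.raise hc hv hright hbelow).weight = moveUnit T.weight (T.entry r c) v := by
  classical
  have hmem : (r, c) ∈ diagram lam N := (mem_diagram hN).2 hc
  have hsplit (S : SSYT lam) (m : ℕ) : S.weight m = (if S.entry r c = m then 1 else 0) +
      ∑ p ∈ (diagram lam N).erase (r, c), if S.entry p.1 p.2 = m then 1 else 0 := by
    rw [weight_eq_card hN, card_filter, ← add_sum_erase _ _ hmem]
  have hrest (m : ℕ) : ∑ p ∈ (diagram lam N).erase (r, c),
      (if (T.raise hc hv hright hbelow).entry p.1 p.2 = m then 1 else 0) =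
      ∑ p ∈ (diagram lam N).erase (r, c), if T.entry p.1 p.2 = m then 1 else 0 := by
    refine sum_congr rfl fun p hp => ?_
    have : ¬(p.1 = r ∧ p.2 = c) := fun h => (mem_erase.1 hp).1 (Prod.ext h.1 h.2)
    simp only [raise, if_neg this]
  funext m
  rw [moveUnit_apply, hsplit, hsplit T, hrest]
  simp only [raise, and_self, if_true]
  split_ifs <;> omega

def HasSuccBelow (T : SSYT lam) (r c : ℕ) : Prop :=
  c < lam (r + 1) ∧ T.entry (r + 1) c = T.entry r c + 1

theorem HasSuccBelow.of_succ {T : SSYT lam} {r c : ℕ} (h : T.HasSuccBelow r (c + 1))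
    (hrow : T.entry r (c + 1) = T.entry r c) : T.HasSuccBelow r c := by
  have hc : c < lam (r + 1) := (Nat.lt_succ_self c).trans h.1
  have := T.rowWeak (r + 1) c h.1
  have := T.colStrict r c hc
  exact ⟨hc, by rw [h.2, hrow] at *; omega⟩

theorem exists_not_hasSuccBelow (hN : ∀ m, N ≤ m → lam m = 0) (T : SSYT lam) {i : ℕ}
    (h : T.weight (i + 1) < T.weight i) :
    ∃ p ∈ diagram lam N, T.entry p.1 p.2 = i ∧ ¬T.HasSuccBelow p.1 p.2 := by
  by_contra! hall
  refine h.not_ge ?_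
  rw [weight_eq_card hN, weight_eq_card hN]
  refine card_le_card_of_injOn (fun p => (p.1 + 1, p.2)) (fun p hp => ?_) fun p _ q _ hpq => ?_
  · obtain ⟨hp, hpi⟩ := mem_filter.1 hp
    obtain ⟨hbelow, hsucc⟩ := hall p hp hpi
    exact mem_filter.2 ⟨(mem_diagram hN).2 hbelow, hsucc.trans (by rw [hpi])⟩
  · simp only [Prod.mk.injEq, Nat.add_right_cancel_iff] at hpq
    exact Prod.ext hpq.1 hpq.2

theorem exists_weight_moveUnit_succ (hN : ∀ m, N ≤ m → lam m = 0) (T : SSYT lam) {i : ℕ}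
    (h : T.weight (i + 1) < T.weight i) :
    ∃ T' : SSYT lam, T'.weight = moveUnit T.weight i (i + 1) := by
  classical
  obtain ⟨⟨r, c⟩, hp, hpi, hpfree⟩ := exists_not_hasSuccBelow hN T h
  -- among the cells with entry `i` and no `i + 1` below, raise one in the rightmost column:
  -- by `HasSuccBelow.of_succ` its right neighbour is then not another `i`
  obtain ⟨⟨r, c⟩, hmem, hmax⟩ :=
    exists_max_image {p ∈ diagram lam N | T.entry p.1 p.2 = i ∧ ¬T.HasSuccBelow p.1 p.2}
      Prod.snd ⟨_, mem_filter.2 ⟨hp, hpi, hpfree⟩⟩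
  obtain ⟨hrc, hi, hfree⟩ : (r, c) ∈ diagram lam N ∧ T.entry r c = i ∧ ¬T.HasSuccBelow r c :=
    mem_filter.1 hmem
  have hc : c < lam r := (mem_diagram hN).1 hrc
  have hright : c + 1 < lam r → i + 1 ≤ T.entry r (c + 1) := by
    intro hc'
    have := T.rowWeak r c hc'
    by_contra! hle
    have hrow : T.entry r (c + 1) = T.entry r c := by omega
    have hfree' : ¬T.HasSuccBelow r (c + 1) := fun hs => hfree (hs.of_succ hrow)
    have := hmax (r, c + 1)
      (mem_filter.2 ⟨(mem_diagram hN).2 hc', show T.entry r (c + 1) = i by omega, hfree'⟩)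
    omega
  have hbelow : c < lam (r + 1) → i + 1 < T.entry (r + 1) c := by
    intro hc'
    have := T.colStrict r c hc'
    have : T.entry (r + 1) c ≠ T.entry r c + 1 := fun he => hfree ⟨hc', he⟩
    omega
  refine ⟨T.raise hc (hi ▸ Nat.le_succ i) hright hbelow, ?_⟩
  rw [weight_raise hN, hi]

theorem exists_weight_moveUnit (hN : ∀ m, N ≤ m → lam m = 0) (T : SSYT lam)
    (hanti : Antitone T.weight) {i j : ℕ} (h : T.weight (i + 1) < T.weight i) (hij : i < j) :
    ∃ T' : SSYT lam, T'.weight = moveUnit T.weight i j := by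
  induction j, hij using Nat.le_induction with
  | base => exact exists_weight_moveUnit_succ hN T h
  | succ j hij ih =>
    obtain ⟨T'', hT''⟩ := ih
    have hlt : T''.weight (j + 1) < T''.weight j := by
      have : T.weight (j + 1) ≤ T.weight j := hanti (Nat.le_succ j)
      simp only [hT'', moveUnit_apply]
      split_ifs <;> omega
    obtain ⟨T', hT'⟩ := exists_weight_moveUnit_succ hN T'' hlt
    exact ⟨T', by rw [hT', hT'', moveUnit_moveUnit]⟩

end SSYT

theorem exists_ssyt_of_dominates {d : ℕ} {lam mu : ℕ → ℕ} (hlam : IsPartitionOf d lam)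
    (hmu : IsPartitionOf d mu) (hdom : Dominates lam mu) : ∃ T : SSYT lam, T.weight = mu := by
  obtain ⟨N, hN, -⟩ := hlam.2
  induction h : ∑ q ∈ range d, (∑ t ∈ range q, lam t - ∑ t ∈ range q, mu t)
    using Nat.strong_induction_on generalizing mu with
  | _ n ih =>
  by_cases hne : mu = lam
  · exact ⟨SSYT.superstandard hlam.1, hne ▸ SSYT.weight_superstandard hlam.isPartition⟩
  obtain ⟨i, j, hij, hjd, hj, hnu, hdomnu, hdesc⟩ := hdom.exists_moveUnit hlam hmu hne
  have hsum := sum_range_moveUnit hj i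
  have hgap : ∑ q ∈ range d,
      (∑ t ∈ range q, lam t - ∑ t ∈ range q, moveUnit mu j i t) < n := by
    rw [← h]
    refine sum_lt_sum (fun q _ => ?_) ⟨j, mem_range.2 hjd, ?_⟩
    · have := hsum q
      split_ifs at this <;> omega
    · have hsum_j := hsum j
      have := hdomnu j
      simp only [lt_irrefl, if_false, if_pos hij] at hsum_j
      omega
  obtain ⟨T, hT⟩ := ih _ hgap hnu hdomnu rfl
  obtain ⟨T', hT'⟩ := T.exists_weight_moveUnit hN (hT ▸ hnu.1) (hT ▸ hdesc) hij
  exact ⟨T', by rw [hT', hT, moveUnit_moveUnit, moveUnit_self hj]⟩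

/-- there exists an SSYT of shape `lam` and weight `mu`
(equivalently `K_{lam,mu} ≠ 0`) iff `mu ⊴ lam`. -/
theorem exists_ssyt_iff_dominates
    (d : ℕ) (lam mu : ℕ → ℕ) (hlam : IsPartitionOf d lam) (hmu : IsPartitionOf d mu) :
    (∃ T : SSYT lam, ∀ m, T.weight m = mu m) ↔ Dominates lam mu := by
  constructor
  · rintro ⟨T, hT⟩ q
    simpa only [hT] using T.sum_range_weight_le hlam.isPartition q
  · intro hdom
    obtain ⟨T, hT⟩ := exists_ssyt_of_dominates hlam hmu hdom
    exact ⟨T, congrFun hT⟩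
end

section
/- Let k ≥ 1 and let γ be a (k+1)-core. Let c' = (i',j') and c = (i,j) be top cells of γ with i ≤ i' and j ≥ j', and set h_γ(c',c) = #{x : i ≤ x ≤ i' and (x,j') ∈ γ} + #{y : j'+1 ≤ y ≤ j and (i,y) ∈ γ}. If c and c' have the same (k+1)-residue and h_γ(c',c) > k+2, then there exists a top cell c'' = (i'',j'') of γ with i'' ≥ i and j'' ≤ j (c'' lies weakly northwest of c) such that h_γ(c'',c) = k+2. -/
/-- If `s` is a "gap" (not of the form `l x - x`) and `s < l a - a`, then there is a
top cell of content `s` in a row `r ≥ a`. -/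
lemma topcell_of_gap (l : ℕ → ℕ) (hmono : Antitone l) (N : ℕ) (hN : ∀ m, N ≤ m → l m = 0)
    (s : ℤ) (hgap : ∀ x : ℕ, ((l x : ℤ) - x) ≠ s) (a : ℕ) (ha : s < (l a : ℤ) - a) :
    ∃ r : ℕ, a ≤ r ∧ IsTopCell l r (s + r).toNat ∧ (((s + r).toNat : ℤ) = s + r) := by
  classical
  set P : ℕ → Prop := fun x => s < (l x : ℤ) - x with hP
  have hB : ∀ x, N + (-s).toNat ≤ x → ¬ P x := by
    intro x hx hPx
    have hlx : l x = 0 := hN x (le_trans (Nat.le_add_right _ _) hx)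
    have h1 : ((-s).toNat : ℤ) ≤ (x : ℤ) := by exact_mod_cast le_trans (Nat.le_add_left _ _) hx
    have h2 : -s ≤ ((-s).toNat : ℤ) := Int.self_le_toNat _
    rw [hP] at hPx
    simp only [hlx, Nat.cast_zero] at hPx
    omega
  have haB : a ≤ N + (-s).toNat := by
    by_contra hcon
    exact hB a (le_of_not_ge hcon) ha
  set r := Nat.findGreatest P (N + (-s).toNat) with hr
  have hra : a ≤ r := Nat.le_findGreatest haB ha
  have hPr : P r := Nat.findGreatest_spec haB ha
  have hnotr1 : ¬ P (r + 1) := by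
    by_cases hc : r + 1 ≤ N + (-s).toNat
    · exact Nat.findGreatest_is_greatest (Nat.lt_succ_self r) hc
    · exact hB (r + 1) (le_of_not_ge hc)
  have h1 : (l (r + 1) : ℤ) - (r + 1) < s :=
    lt_of_le_of_ne (not_lt.1 hnotr1) (hgap (r + 1))
  have h0 : (0 : ℤ) ≤ s + r := by
    have : (0 : ℤ) ≤ (l (r + 1) : ℤ) := Int.ofNat_nonneg _
    omega
  have hy : (((s + r).toNat : ℤ) = s + r) := Int.toNat_of_nonneg h0
  have hPr' : s < (l r : ℤ) - r := hPr
  refine ⟨r, hra, ⟨?_, ?_⟩, hy⟩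
  · have : ((s + r).toNat : ℤ) < (l r : ℤ) := by omega
    exact_mod_cast this
  · have : (l (r + 1) : ℤ) ≤ ((s + r).toNat : ℤ) := by push_cast; omega
    exact_mod_cast this

/-- Hook length of a cell `(a, y0)` in the column of a top cell `(r, y0)`. -/
lemma hook_eq_of_topcell (l : ℕ → ℕ) (hmono : Antitone l) (a r y0 : ℕ)
    (har : a ≤ r) (htc : IsTopCell l r y0) :
    hook l a y0 = (l a - y0) + (r - a) := by
  unfold hook
  congr 1
  have hiff : ∀ x : ℕ, (a < x ∧ y0 < l x) ↔ x ∈ Finset.Ioc a r := by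
    intro x
    rw [Finset.mem_Ioc]
    constructor
    · rintro ⟨hax, hyx⟩
      refine ⟨hax, ?_⟩
      by_contra hcon
      have : l x ≤ l (r + 1) := hmono (by omega)
      have := htc.2
      omega
    · rintro ⟨hax, hxr⟩
      exact ⟨hax, lt_of_lt_of_le htc.1 (hmono hxr)⟩
  rw [Nat.card_congr (Equiv.subtypeEquivRight hiff)]
  rw [Nat.card_eq_fintype_card, Fintype.card_coe, Nat.card_Ioc]

/-- In a `(k+1)`-core, the set of beta numbers is closed under subtracting `k+1`. -/
lemma core_sub (k : ℕ) (l : ℕ → ℕ) (hcore : IsCore k l) (a : ℕ) :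
    ∃ a' : ℕ, (l a' : ℤ) - a' = (l a : ℤ) - a - (k + 1) := by
  by_contra hcon
  push_neg at hcon
  obtain ⟨hmono, N, hN⟩ := hcore.1
  obtain ⟨r, har, htc, hy⟩ := topcell_of_gap l hmono N hN ((l a : ℤ) - a - (k + 1)) hcon a
    (by omega)
  set y0 := ((l a : ℤ) - a - (k + 1) + r).toNat with hy0
  have hy0la : y0 < l a := lt_of_lt_of_le htc.1 (hmono har)
  refine hcore.2 a y0 hy0la ?_
  rw [hook_eq_of_topcell l hmono a r y0 har htc]
  omega

lemma core_chain (k : ℕ) (l : ℕ → ℕ) (hcore : IsCore k l) (m : ℕ) (a : ℕ) :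
    ∃ a' : ℕ, (l a' : ℤ) - a' = (l a : ℤ) - a - (k + 1) * m := by
  induction m with
  | zero => exact ⟨a, by simp⟩
  | succ n ih =>
    obtain ⟨b, hb⟩ := ih
    obtain ⟨a', ha'⟩ := core_sub k l hcore b
    exact ⟨a', by rw [ha', hb]; push_cast; ring⟩

/-- The content of a top cell is a gap of the beta numbers. -/
lemma gap_of_topcell (l : ℕ → ℕ) (hmono : Antitone l) (i j : ℕ) (h : IsTopCell l i j) :
    ∀ x : ℕ, ((l x : ℤ) - x) ≠ (j : ℤ) - i := by
  intro x hx
  rcases le_or_gt x i with hxi | hxi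
  · have h1 : l i ≤ l x := hmono hxi
    have h2 : j < l i := h.1
    have hxi' : (x : ℤ) ≤ (i : ℤ) := by exact_mod_cast hxi
    have h1' : ((l i : ℤ)) ≤ (l x : ℤ) := by exact_mod_cast h1
    have h2' : (j : ℤ) < (l i : ℤ) := by exact_mod_cast h2
    omega
  · have h1 : l x ≤ l (i + 1) := hmono hxi
    have h2 : l (i + 1) ≤ j := h.2
    have hxi' : (i : ℤ) + 1 ≤ (x : ℤ) := by exact_mod_cast hxi
    have h1' : ((l x : ℤ)) ≤ (l (i + 1) : ℤ) := by exact_mod_cast h1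
    have h2' : ((l (i + 1) : ℤ)) ≤ (j : ℤ) := by exact_mod_cast h2
    omega

/-- For a top cell `(i'', j'')` weakly northwest of a cell `(i, j)` of the diagram,
`hBetween` is just the taxicab distance plus one. -/
lemma hBetween_eq_dist (l : ℕ → ℕ) (hmono : Antitone l) (i'' j'' i j : ℕ)
    (htc : IsTopCell l i'' j'') (hi : i ≤ i'') (hj : j'' ≤ j) (hcell : j < l i) :
    hBetween l i'' j'' i j = (i'' - i + 1) + (j - j'') := by
  unfold hBetween
  rw [Finset.filter_true_of_mem, Finset.filter_true_of_mem, Nat.card_Icc, Nat.card_Icc]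
  · omega
  · intro y hy
    rw [Finset.mem_Icc] at hy
    omega
  · intro x hx
    rw [Finset.mem_Icc] at hx
    exact lt_of_lt_of_le htc.1 (hmono hx.2)

/-- if two top cells `c'`, `c` (with `c` weakly southeast of `c'`) of a
`(k+1)`-core have the same residue and `h_γ(c',c) > k+2`, then there is a top cell `c''`
weakly northwest of `c` with `h_γ(c'',c) = k+2`. -/
theorem exists_topcell_hBetween_eq
    (k : ℕ) (hk : 1 ≤ k) (l : ℕ → ℕ) (hcore : IsCore k l)
    (i' j' i j : ℕ) (hc' : IsTopCell l i' j') (hc : IsTopCell l i j)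
    (hii : i ≤ i') (hjj : j' ≤ j)
    (hres : residue k i j = residue k i' j')
    (hbig : k + 2 < hBetween l i' j' i j) :
    ∃ i'' j'', IsTopCell l i'' j'' ∧ i ≤ i'' ∧ j'' ≤ j ∧
      hBetween l i'' j'' i j = k + 2 := by
  obtain ⟨hmono, N, hN⟩ := hcore.1
  have hg0 := gap_of_topcell l hmono i j hc
  have hg1 := gap_of_topcell l hmono i' j' hc'
  -- divisibility from equal residues
  have hdvd : ((k : ℤ) + 1) ∣ (((j : ℤ) - i) - ((j' : ℤ) - i')) := by
    have hmod : (((j : ℤ) - i : ℤ) : ZMod (k + 1)) = (((j' : ℤ) - i' : ℤ) : ZMod (k + 1)) := by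
      push_cast
      exact hres
    have := (ZMod.intCast_eq_intCast_iff _ _ _).1 hmod
    have hd := Int.ModEq.dvd this
    have : ((k : ℤ) + 1) ∣ (((j' : ℤ) - i') - ((j : ℤ) - i)) := by exact_mod_cast hd
    have h' := dvd_neg.2 this
    rwa [neg_sub] at h'
  -- size bound
  have hbig' : k + 2 < (i' - i + 1) + (j - j') := by
    rwa [hBetween_eq_dist l hmono i' j' i j hc' hii hjj hc.1] at hbig
  have hs01 : (k : ℤ) + 1 < ((j : ℤ) - i) - ((j' : ℤ) - i') := by
    have h1 : (i : ℤ) ≤ i' := by exact_mod_cast hii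
    have h2 : (j' : ℤ) ≤ j := by exact_mod_cast hjj
    have h3 : ((k : ℤ) + 2) < ((i' : ℤ) - i + 1) + ((j : ℤ) - j') := by
      exact_mod_cast (by push_cast; omega : ((k : ℤ) + 2) < ((i' - i + 1 : ℕ) : ℤ) + ((j - j' : ℕ) : ℤ))
    omega
  -- `(j - i) - (k+1)` is a gap
  have hg2 : ∀ x : ℕ, ((l x : ℤ) - x) ≠ ((j : ℤ) - i) - (k + 1) := by
    intro x hx
    obtain ⟨m, hm⟩ := hdvd
    have hm2 : 2 ≤ m := by nlinarith [hs01]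
    obtain ⟨a', ha'⟩ := core_chain k l hcore (m - 1).toNat x
    refine hg1 a' ?_
    rw [ha', hx]
    have htn : (((m - 1).toNat : ℤ)) = m - 1 := Int.toNat_of_nonneg (by omega)
    rw [htn]
    linarith [hm]
  -- build the top cell of content `(j - i) - (k+1)`
  obtain ⟨r, hir, htc2, hy⟩ := topcell_of_gap l hmono N hN (((j : ℤ) - i) - (k + 1)) hg2 i
    (by
      have h2 : (j : ℤ) < (l i : ℤ) := by exact_mod_cast hc.1
      omega)
  set j'' := ((((j : ℤ) - i) - (k + 1)) + r).toNat with hj''def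
  have hj''j : j'' ≤ j := by
    rcases eq_or_lt_of_le hir with heq | hlt
    · subst heq
      omega
    · have h1 : l r ≤ l (i + 1) := hmono hlt
      have h2 : l (i + 1) ≤ j := hc.2
      have h3 := htc2.1
      omega
  refine ⟨r, j'', htc2, hir, hj''j, ?_⟩
  rw [hBetween_eq_dist l hmono r j'' i j htc2 hir hj''j hc.1]
  omega
end

section
/- Let k ≥ 1. For every (k+1)-core γ, the sequence p(γ) is a k-bounded partition, and the map γ ↦ p(γ) is a bijection from the set of all (k+1)-cores onto the set of all k-bounded partitions. -/
/-!
Let `legLength l i j` be the number of cells of `l` above the cell `(i, j)`. The map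
`j ↦ j - legLength l i j` is strictly increasing and is the identity from `l (i + 1)` on; call its
range `S`. Since `hook l i j = l i - (j - legLength l i j)`, if row `i` has length `a` then
`p_i = #(S ∩ [a - k, a))`, `p_{i+1} = #(S ∩ [l (i + 1) - k - 1, l (i + 1)))`, and row `i` has no
hook `k + 1` iff `a - k - 1 ∉ S`. As `a` runs upwards from `l (i + 1)`, the count
`#(S ∩ [a - k, a))` increases by `0` or `1` at each step and reaches `k`, and the lengths `a`
without a hook `k + 1` are exactly those where it has just increased (for `a = l (i + 1)`: where it
equals `p_{i+1}`). So, given the rows above, the admissible lengths of row `i` correspond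
increasingly to the values `p_{i+1}, …, k` of `p_i`; going down the rows gives injectivity and
surjectivity.
-/

noncomputable def windowCount (S : Set ℤ) (k a : ℕ) : ℕ := (S ∩ Set.Ico ((a : ℤ) - k) a).ncard

section windowCount

variable {S : Set ℤ} {k t a b : ℕ}

lemma windowCount_le : windowCount S k a ≤ k := by
  calc windowCount S k a ≤ (Set.Ico ((a : ℤ) - k) a).ncard :=
        Set.ncard_le_ncard Set.inter_subset_right (Set.finite_Ico _ _)
    _ = k := by rw [← Finset.coe_Ico, Set.ncard_coe_finset, Int.card_Ico]; omega

lemma windowCount_eq_of_subset (h : Set.Ico ((a : ℤ) - k) a ⊆ S) : windowCount S k a = k := by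
  rw [windowCount, Set.inter_eq_right.mpr h, ← Finset.coe_Ico, Set.ncard_coe_finset,
    Int.card_Ico]
  omega

lemma ncard_insert_inter_Ico {x lo hi : ℤ} (hx : x ∉ Set.Ico lo hi) :
    (insert x (S ∩ Set.Ico lo hi)).ncard = (S ∩ Set.Ico lo hi).ncard + 1 :=
  Set.ncard_insert_of_notMem (fun h => hx (Set.inter_subset_right h))
    ((Set.finite_Ico lo hi).inter_of_right S)

lemma Ico_sub_succ_eq_insert (a k : ℕ) :
    Set.Ico ((a : ℤ) - ↑(k + 1)) a = insert ((a : ℤ) - (k + 1)) (Set.Ico ((a : ℤ) - k) a) := by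
  rw [Nat.cast_succ, ← sub_sub, Set.insert_Ico_left_eq_Ico_sub_one (by omega)]

lemma windowCount_succ_of_mem (h : (a : ℤ) - (k + 1) ∈ S) :
    windowCount S (k + 1) a = windowCount S k a + 1 := by
  rw [windowCount, Ico_sub_succ_eq_insert, Set.inter_insert_of_mem h,
    ncard_insert_inter_Ico (by simp only [Set.mem_Ico]; omega), windowCount]

lemma windowCount_succ_of_notMem (h : (a : ℤ) - (k + 1) ∉ S) :
    windowCount S (k + 1) a = windowCount S k a := by
  rw [windowCount, Ico_sub_succ_eq_insert, Set.inter_insert_of_notMem h, windowCount]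

lemma windowCount_le_succ : windowCount S k a ≤ windowCount S (k + 1) a := by
  by_cases h : (a : ℤ) - (k + 1) ∈ S
  · rw [windowCount_succ_of_mem h]; exact Nat.le_succ _
  · rw [windowCount_succ_of_notMem h]

lemma windowCount_succ_le : windowCount S (k + 1) a ≤ windowCount S k a + 1 := by
  by_cases h : (a : ℤ) - (k + 1) ∈ S
  · rw [windowCount_succ_of_mem h]
  · rw [windowCount_succ_of_notMem h]; exact Nat.le_succ _

lemma notMem_of_windowCount_succ_eq (h : windowCount S (k + 1) a = windowCount S k a) :
    (a : ℤ) - (k + 1) ∉ S := fun hmem => by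
  have := windowCount_succ_of_mem hmem
  omega

lemma windowCount_succ_succ (h : (a : ℤ) ∈ S) :
    windowCount S (k + 1) (a + 1) = windowCount S k a + 1 := by
  have hIco : Set.Ico (((a + 1 : ℕ) : ℤ) - ↑(k + 1)) ↑(a + 1) =
      insert (a : ℤ) (Set.Ico ((a : ℤ) - k) a) := by
    rw [Set.insert_Ico_right_eq_Ico_add_one (by omega)]
    push_cast
    ring_nf
  rw [windowCount, hIco, Set.inter_insert_of_mem h,
    ncard_insert_inter_Ico (by simp only [Set.mem_Ico]; omega), windowCount]

lemma windowCount_mono (hS : ∀ x : ℤ, t ≤ x → x ∈ S) (hta : t ≤ a) (hab : a ≤ b) :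
    windowCount S k a ≤ windowCount S k b := by
  induction b, hab using Nat.le_induction with
  | base => exact le_rfl
  | succ b hab ih =>
    have hstep := windowCount_succ_succ (k := k) (hS b (by omega))
    have hle := windowCount_succ_le (S := S) (k := k) (a := b + 1)
    omega

lemma windowCount_succ_le_of_notMem (hS : ∀ x : ℤ, t ≤ x → x ∈ S) (hta : t ≤ a)
    (ha : (a : ℤ) - (k + 1) ∉ S) : windowCount S (k + 1) t ≤ windowCount S k a := by
  rcases eq_or_lt_of_le hta with rfl | hlt
  · exact (windowCount_succ_of_notMem ha).le
  · obtain ⟨b, rfl⟩ : ∃ b, a = b + 1 := ⟨a - 1, by omega⟩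
    rw [← windowCount_succ_of_notMem ha, windowCount_succ_succ (hS b (by omega))]
    have := windowCount_mono (k := k) hS le_rfl (show t ≤ b by omega)
    have := windowCount_succ_le (S := S) (k := k) (a := t)
    omega

lemma windowCount_lt_of_notMem (hS : ∀ x : ℤ, t ≤ x → x ∈ S) (hta : t ≤ a) (hab : a < b)
    (hb : (b : ℤ) - (k + 1) ∉ S) : windowCount S k a < windowCount S k b := by
  obtain ⟨c, rfl⟩ : ∃ c, b = c + 1 := ⟨b - 1, by omega⟩
  rw [← windowCount_succ_of_notMem hb, windowCount_succ_succ (hS c (by omega))]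
  have := windowCount_mono (k := k) hS hta (show a ≤ c by omega)
  omega

lemma eq_of_windowCount_eq (hS : ∀ x : ℤ, t ≤ x → x ∈ S) (hta : t ≤ a)
    (ha : (a : ℤ) - (k + 1) ∉ S) (htb : t ≤ b) (hb : (b : ℤ) - (k + 1) ∉ S)
    (h : windowCount S k a = windowCount S k b) : a = b := by
  rcases lt_trichotomy a b with hab | rfl | hba
  · exact absurd h (windowCount_lt_of_notMem hS hta hab hb).ne
  · rfl
  · exact absurd h (windowCount_lt_of_notMem hS htb hba ha).ne'

lemma exists_notMem_windowCount_eq (hS : ∀ x : ℤ, t ≤ x → x ∈ S) {v : ℕ}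
    (hv : windowCount S (k + 1) t ≤ v) (hvk : v ≤ k) :
    ∃ a, t ≤ a ∧ (a : ℤ) - (k + 1) ∉ S ∧ windowCount S k a = v := by
  -- the least `a ≥ t` with `v ≤ windowCount S k a` works
  have hex : ∃ n, v ≤ windowCount S k (t + n) := by
    refine ⟨k, ?_⟩
    rwa [windowCount_eq_of_subset fun x hx => hS x (by
      simp only [Set.mem_Ico] at hx; push_cast at hx; omega)]
  have hle : v ≤ windowCount S k (t + Nat.find hex) := Nat.find_spec hex
  have hle_succ := windowCount_le_succ (S := S) (k := k) (a := t + Nat.find hex)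
  suffices hR : windowCount S (k + 1) (t + Nat.find hex) ≤ v from
    ⟨t + Nat.find hex, by omega, notMem_of_windowCount_succ_eq (by omega), by omega⟩
  rcases hn : Nat.find hex with _ | m
  · simpa using hv
  · have hlt : windowCount S k (t + m) < v := not_le.mp (Nat.find_min hex (by omega))
    rw [← add_assoc, windowCount_succ_succ (hS (t + m) (by omega))]
    omega

end windowCount

lemma strictMono_sub_of_antitone {f : ℕ → ℕ} (hf : Antitone f) :
    StrictMono fun j : ℕ => (j : ℤ) - f j :=
  strictMono_nat_of_lt_succ fun j => by
    have : f (j + 1) ≤ f j := hf (Nat.le_succ j)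
    omega

lemma card_filter_range_eq_windowCount {φ : ℕ → ℤ} (hφ : StrictMono φ) {a : ℕ} (ha : φ a = a)
    (k : ℕ) : ((Finset.range a).filter fun j => (a : ℤ) - k ≤ φ j).card =
      windowCount (Set.range φ) k a := by
  have himage : Set.range φ ∩ Set.Ico ((a : ℤ) - k) a =
      φ '' ↑((Finset.range a).filter fun j => (a : ℤ) - k ≤ φ j) := by
    ext x
    simp only [Set.mem_inter_iff, Set.mem_range, Set.mem_Ico, Finset.coe_filter,
      Finset.mem_range, Set.mem_image, Set.mem_ofPred_eq]
    constructor
    · rintro ⟨⟨j, rfl⟩, hlo, hhi⟩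
      exact ⟨j, ⟨hφ.lt_iff_lt.mp (ha ▸ hhi), hlo⟩, rfl⟩
    · rintro ⟨j, ⟨hj, hlo⟩, rfl⟩
      exact ⟨⟨j, rfl⟩, hlo, ha ▸ hφ hj⟩
  rw [windowCount, himage, Set.ncard_image_of_injective _ hφ.injective, Set.ncard_coe_finset]

noncomputable def legLength (l : ℕ → ℕ) (i j : ℕ) : ℕ := Nat.card {i' : ℕ // i < i' ∧ j < l i'}

section legLength

variable {l l' : ℕ → ℕ} {i j N : ℕ}

lemma hook_eq_sub_add_legLength : hook l i j = l i - j + legLength l i j := rfl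

lemma legLength_eq_ncard : legLength l i j = {i' | i < i' ∧ j < l i'}.ncard :=
  Nat.card_coe_set_eq _

lemma finite_setOf_lt_lt (hN : ∀ m, N ≤ m → l m = 0) (i j : ℕ) :
    {i' | i < i' ∧ j < l i'}.Finite :=
  (Set.finite_Iio N).subset fun x hx => by
    by_contra hxN
    have := hN x (not_lt.mp hxN)
    exact absurd hx.2 (by omega)

lemma legLength_antitone (hN : ∀ m, N ≤ m → l m = 0) : Antitone (legLength l i) :=
  fun j j' hjj' => by
    rw [legLength_eq_ncard, legLength_eq_ncard]
    exact Set.ncard_le_ncard (fun x hx => ⟨hx.1, by have := hx.2; omega⟩)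
      (finite_setOf_lt_lt hN i j)

lemma legLength_eq_zero (hl : Antitone l) (hj : l (i + 1) ≤ j) : legLength l i j = 0 :=
  Nat.card_eq_zero.mpr <| Or.inl ⟨fun ⟨x, hix, hjx⟩ => by
    have : l x ≤ l (i + 1) := hl hix
    omega⟩

lemma legLength_succ (hN : ∀ m, N ≤ m → l m = 0) (hj : j < l (i + 1)) :
    legLength l i j = legLength l (i + 1) j + 1 := by
  have hset : {i' | i < i' ∧ j < l i'} = insert (i + 1) {i' | i + 1 < i' ∧ j < l i'} := by
    ext x
    simp only [Set.mem_ofPred_eq, Set.mem_insert_iff]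
    constructor
    · rintro ⟨hx, hjx⟩
      rcases eq_or_lt_of_le (Nat.succ_le_of_lt hx) with rfl | hx'
      exacts [Or.inl rfl, Or.inr ⟨hx', hjx⟩]
    · rintro (rfl | ⟨hx, hjx⟩)
      exacts [⟨Nat.lt_succ_self i, hj⟩, ⟨by omega, hjx⟩]
  rw [legLength_eq_ncard, legLength_eq_ncard, hset,
    Set.ncard_insert_of_notMem (fun h => lt_irrefl _ h.1) (finite_setOf_lt_lt hN _ _)]

lemma legLength_congr (h : ∀ i', i < i' → l i' = l' i') : legLength l i = legLength l' i :=
  funext fun _ => Nat.card_congr <| Equiv.subtypeEquivRight fun x =>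
    ⟨fun hx => ⟨hx.1, h x hx.1 ▸ hx.2⟩, fun hx => ⟨hx.1, (h x hx.1).symm ▸ hx.2⟩⟩

lemma hook_congr (h : ∀ i', i ≤ i' → l i' = l' i') : hook l i = hook l' i := by
  funext j
  rw [hook_eq_sub_add_legLength, hook_eq_sub_add_legLength, h i le_rfl,
    legLength_congr fun i' hi' => h i' hi'.le]

lemma pMap_congr {k : ℕ} (h : ∀ i', i ≤ i' → l i' = l' i') : pMap k l i = pMap k l' i := by
  rw [pMap, pMap, hook_congr h, h i le_rfl]

end legLength

/-- On the diagram `hook l i j = l i - (j - legLength l i j)`, so the hook lengths in row `i` are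
read off from this set, which only depends on the rows above row `i`. -/
def betaSet (l : ℕ → ℕ) (i : ℕ) : Set ℤ := Set.range fun j : ℕ => (j : ℤ) - legLength l i j

section betaSet

variable {k : ℕ} {l l' : ℕ → ℕ} {i : ℕ}

lemma betaSet_congr (h : ∀ i', i < i' → l i' = l' i') : betaSet l i = betaSet l' i := by
  rw [betaSet, betaSet, legLength_congr h]

lemma mem_betaSet_of_le (hl : Antitone l) (i : ℕ) (x : ℤ) (hx : l (i + 1) ≤ x) : x ∈ betaSet l i :=
  ⟨x.toNat, by dsimp only; rw [legLength_eq_zero hl (by omega)]; omega⟩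

lemma forall_hook_ne_iff_notMem_betaSet (hl : Antitone l) :
    (∀ j, j < l i → hook l i j ≠ k + 1) ↔ (l i : ℤ) - (k + 1) ∉ betaSet l i := by
  refine ⟨fun h ⟨j, hj⟩ => ?_, fun h j hj hhook => h ⟨j, ?_⟩⟩
  · dsimp only at hj
    by_cases hji : j < l i
    · exact h j hji (by rw [hook_eq_sub_add_legLength]; omega)
    · rw [legLength_eq_zero hl ((hl (Nat.le_succ i)).trans (not_lt.mp hji))] at hj
      omega
  · rw [hook_eq_sub_add_legLength] at hhook
    dsimp only
    omega

lemma pMap_eq_windowCount (hl : IsPartition l) (k i : ℕ) :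
    pMap k l i = windowCount (betaSet l i) k (l i) := by
  obtain ⟨hanti, N, hN⟩ := hl
  rw [betaSet, ← card_filter_range_eq_windowCount (strictMono_sub_of_antitone
    (legLength_antitone hN)) (by rw [legLength_eq_zero hanti (hanti (Nat.le_succ i))]; simp)]
  refine congrArg Finset.card (Finset.filter_congr fun j hj => ?_)
  rw [Finset.mem_range] at hj
  rw [hook_eq_sub_add_legLength]
  omega

lemma pMap_succ_eq_windowCount (hl : IsPartition l) (k i : ℕ) :
    pMap k l (i + 1) = windowCount (betaSet l i) (k + 1) (l (i + 1)) := by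
  obtain ⟨hanti, N, hN⟩ := hl
  rw [betaSet, ← card_filter_range_eq_windowCount (strictMono_sub_of_antitone
    (legLength_antitone hN)) (by rw [legLength_eq_zero hanti le_rfl]; simp)]
  refine congrArg Finset.card (Finset.filter_congr fun j hj => ?_)
  rw [Finset.mem_range] at hj
  rw [hook_eq_sub_add_legLength, legLength_succ hN hj]
  omega

lemma notMem_betaSet_of_isCore (hl : IsCore k l) (i : ℕ) :
    (l i : ℤ) - (k + 1) ∉ betaSet l i :=
  (forall_hook_ne_iff_notMem_betaSet hl.1.1).mp (hl.2 i)

end betaSet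

section pMap

variable {k : ℕ} {l : ℕ → ℕ}

lemma pMap_le (hl : IsPartition l) (i : ℕ) : pMap k l i ≤ k :=
  (pMap_eq_windowCount hl k i).trans_le windowCount_le

lemma pMap_le_self (i : ℕ) : pMap k l i ≤ l i :=
  (Finset.card_filter_le _ _).trans (Finset.card_range _).le

lemma pMap_isPartition (hl : IsCore k l) : IsPartition (pMap k l) := by
  have hp := hl.1
  refine ⟨antitone_nat_of_succ_le fun i => ?_, hp.2.imp fun N hN m hm => ?_⟩
  · rw [pMap_succ_eq_windowCount hp, pMap_eq_windowCount hp]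
    exact windowCount_succ_le_of_notMem (mem_betaSet_of_le hp.1 i) (hp.1 (Nat.le_succ i))
      (notMem_betaSet_of_isCore hl i)
  · exact Nat.eq_zero_of_le_zero (hN m hm ▸ pMap_le_self m)

lemma IsCore.row_eq_of_pMap_eq {i : ℕ} {δ : ℕ → ℕ} (hl : IsCore k l) (hδ : IsCore k δ)
    (hp : pMap k l i = pMap k δ i) (htail : ∀ i', i < i' → l i' = δ i') : l i = δ i := by
  have hS : betaSet δ i = betaSet l i := (betaSet_congr htail).symm
  have ht : δ (i + 1) = l (i + 1) := (htail (i + 1) (Nat.lt_succ_self i)).symm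
  refine eq_of_windowCount_eq (mem_betaSet_of_le hl.1.1 i) (hl.1.1 (Nat.le_succ i))
    (notMem_betaSet_of_isCore hl i) (ht ▸ hδ.1.1 (Nat.le_succ i))
    (hS ▸ notMem_betaSet_of_isCore hδ i) ?_
  rw [← pMap_eq_windowCount hl.1, hp, pMap_eq_windowCount hδ.1, hS]

lemma IsPartition.ite_le (hl : IsPartition l) {i a : ℕ} (ha : l (i + 1) ≤ a) :
    IsPartition fun x => if x ≤ i then a else l x := by
  obtain ⟨hanti, N, hN⟩ := hl
  refine ⟨fun x y hxy => ?_, max N (i + 1), fun x hx => ?_⟩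
  · dsimp only
    split_ifs with hy hx
    · exact le_rfl
    · omega
    · exact (hanti (by omega : i + 1 ≤ y)).trans ha
    · exact hanti hxy
  · dsimp only
    rw [if_neg (by omega : ¬x ≤ i), hN x (le_of_max_le_left hx)]

lemma exists_row_extension {i v : ℕ} (hl : IsPartition l) (hv : pMap k l (i + 1) ≤ v)
    (hvk : v ≤ k) :
    ∃ l' : ℕ → ℕ, IsPartition l' ∧ (∀ x, i < x → l' x = l x) ∧
      (∀ j, j < l' i → hook l' i j ≠ k + 1) ∧ pMap k l' i = v := by
  rw [pMap_succ_eq_windowCount hl] at hv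
  obtain ⟨a, hta, ha, hPa⟩ := exists_notMem_windowCount_eq (mem_betaSet_of_le hl.1 i) hv hvk
  have htail : ∀ x, i < x → (if x ≤ i then a else l x) = l x := fun x hx => if_neg (by omega)
  have hl' := hl.ite_le hta
  refine ⟨_, hl', htail, ?_⟩
  rw [forall_hook_ne_iff_notMem_betaSet hl'.1, pMap_eq_windowCount hl', betaSet_congr htail,
    if_pos le_rfl]
  exact ⟨ha, hPa⟩

end pMap

lemma pMap_injOn (k : ℕ) : Set.InjOn (pMap k) {l | IsCore k l} := by
  intro γ hγ δ hδ hp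
  obtain ⟨N, hNγ, hNδ⟩ : ∃ N, (∀ m, N ≤ m → γ m = 0) ∧ ∀ m, N ≤ m → δ m = 0 := by
    obtain ⟨N₁, h₁⟩ := hγ.1.2
    obtain ⟨N₂, h₂⟩ := hδ.1.2
    exact ⟨max N₁ N₂, fun m hm => h₁ m (le_of_max_le_left hm),
      fun m hm => h₂ m (le_of_max_le_right hm)⟩
  suffices h : ∀ i ≤ N, ∀ x, i ≤ x → γ x = δ x from
    funext fun x => h 0 (Nat.zero_le N) x (Nat.zero_le x)
  intro i hi
  induction hi using Nat.decreasingInduction with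
  | self => exact fun x hx => by rw [hNγ x hx, hNδ x hx]
  | of_succ i _ ih =>
    intro x hx
    obtain rfl | hx := eq_or_lt_of_le hx
    · exact hγ.row_eq_of_pMap_eq hδ (congrFun hp _) ih
    · exact ih x hx

lemma pMap_surjOn (k : ℕ) :
    Set.SurjOn (pMap k) {l | IsCore k l} {m | IsPartition m ∧ m 0 ≤ k} := by
  rintro m ⟨⟨hm, N, hN⟩, hm0⟩
  suffices h : ∀ i ≤ N, ∃ γ, IsPartition γ ∧
      ∀ x, i ≤ x → (∀ j, j < γ x → hook γ x j ≠ k + 1) ∧ pMap k γ x = m x by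
    obtain ⟨γ, hγ, hrows⟩ := h 0 (Nat.zero_le N)
    exact ⟨γ, ⟨hγ, fun x => (hrows x (Nat.zero_le x)).1⟩,
      funext fun x => (hrows x (Nat.zero_le x)).2⟩
  intro i hi
  induction hi using Nat.decreasingInduction with
  | self =>
    refine ⟨0, ⟨antitone_const, 0, fun _ _ => rfl⟩, fun x hx =>
      ⟨fun j hj => absurd hj (Nat.not_lt_zero j), ?_⟩⟩
    simp [pMap, hN x hx]
  | of_succ i _ ih =>
    obtain ⟨γ, hγ, hrows⟩ := ih
    obtain ⟨γ', hγ', htail, hcore, hp⟩ := exists_row_extension hγ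
      ((hrows (i + 1) le_rfl).2.trans_le (hm (Nat.le_succ i))) ((hm (Nat.zero_le i)).trans hm0)
    refine ⟨γ', hγ', fun x hx => ?_⟩
    obtain rfl | hx := eq_or_lt_of_le hx
    · exact ⟨hcore, hp⟩
    · have hxtail : ∀ y, x ≤ y → γ' y = γ y := fun y hy => htail y (by omega)
      rw [hook_congr hxtail, pMap_congr hxtail, htail x hx]
      exact hrows x hx

theorem pMap_bijOn_cores_general
    (k : ℕ) :
    (∀ l : ℕ → ℕ, IsCore k l → IsPartition (pMap k l) ∧ pMap k l 0 ≤ k) ∧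
    Set.BijOn (pMap k) {l : ℕ → ℕ | IsCore k l}
      {m : ℕ → ℕ | IsPartition m ∧ m 0 ≤ k} := by
  have hmaps : ∀ l : ℕ → ℕ, IsCore k l → IsPartition (pMap k l) ∧ pMap k l 0 ≤ k :=
    fun l hl => ⟨pMap_isPartition hl, pMap_le hl.1 0⟩
  exact ⟨hmaps, hmaps, pMap_injOn k, pMap_surjOn k⟩

/-- `p` maps every `(k+1)`-core to a `k`-bounded partition, and is a
bijection from the set of `(k+1)`-cores onto the set of `k`-bounded partitions. -/
theorem pMap_bijOn_cores
    (k : ℕ) (hk : 1 ≤ k) :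
    (∀ l : ℕ → ℕ, IsCore k l → IsPartition (pMap k l) ∧ pMap k l 0 ≤ k) ∧
    Set.BijOn (pMap k) {l : ℕ → ℕ | IsCore k l}
      {m : ℕ → ℕ | IsPartition m ∧ m 0 ≤ k} :=
  pMap_bijOn_cores_general k
end

section
/- Let k ≥ 1 and let γ be a (k+1)-core having at least one removable corner of (k+1)-residue i₀. Let r be the largest row index such that row r of γ contains a removable corner of (k+1)-residue i₀, and let s_{i₀}(γ) be the diagram obtained from γ by deleting all removable corners of (k+1)-residue i₀. Then s_{i₀}(γ) is a (k+1)-core, and p(s_{i₀}(γ)) is obtained from p(γ) by decreasing its r-th term by one and leaving all other terms unchanged. -/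
namespace PMapAux

noncomputable def colLen (l : ℕ → ℕ) (j : ℕ) : ℕ := sInf {i | l i ≤ j}

noncomputable def bS (l : ℕ → ℕ) (i : ℕ) : ℤ := (l i : ℤ) - i

noncomputable def gS (l : ℕ → ℕ) (j : ℕ) : ℤ := (j : ℤ) + 1 - colLen l j

def BSet (l : ℕ → ℕ) : Set ℤ := Set.range (bS l)

section Basic

variable {l : ℕ → ℕ} {N : ℕ}

lemma colLen_nonempty (hz : ∀ m, N ≤ m → l m = 0) (j : ℕ) :
    {i | l i ≤ j}.Nonempty :=
  ⟨N, by simp [hz N le_rfl]⟩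

lemma colLen_spec (hz : ∀ m, N ≤ m → l m = 0) (j : ℕ) :
    l (colLen l j) ≤ j :=
  Nat.sInf_mem (colLen_nonempty hz j)

lemma lt_colLen_iff (hl : Antitone l) (hz : ∀ m, N ≤ m → l m = 0) {i j : ℕ} :
    j < l i ↔ i < colLen l j := by
  constructor
  · intro h
    by_contra hc
    push_neg at hc
    have := (hl hc).trans (colLen_spec hz j)
    omega
  · intro h
    have := Nat.notMem_of_lt_sInf h
    simpa using Nat.lt_of_not_le this

lemma colLen_anti (hz : ∀ m, N ≤ m → l m = 0) : Antitone (colLen l) := by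
  intro j j' hj
  exact Nat.sInf_le (le_trans (colLen_spec hz j) hj)

lemma bS_strictAnti (hl : Antitone l) : StrictAnti (bS l) := by
  apply strictAnti_nat_of_succ_lt
  intro i
  have := hl (Nat.le_succ i)
  simp only [Nat.succ_eq_add_one] at this
  unfold bS
  omega

lemma gS_strictMono (hz : ∀ m, N ≤ m → l m = 0) : StrictMono (gS l) := by
  apply strictMono_nat_of_lt_succ
  intro j
  have := colLen_anti hz (Nat.le_succ j)
  simp only [Nat.succ_eq_add_one] at this
  unfold gS
  omega

lemma gS_lt_bS (hl : Antitone l) (hz : ∀ m, N ≤ m → l m = 0) {i j : ℕ}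
    (h : j < l i) : gS l j < bS l i := by
  have h2 : i < colLen l j := (lt_colLen_iff hl hz).1 h
  unfold gS bS
  omega

lemma bS_lt_gS (hl : Antitone l) (hz : ∀ m, N ≤ m → l m = 0) {i j : ℕ}
    (h : l i ≤ j) : bS l i < gS l j := by
  have h2 : ¬ i < colLen l j := by
    rw [← lt_colLen_iff hl hz]; omega
  unfold gS bS
  omega

lemma lt_iff_cell (hl : Antitone l) (hz : ∀ m, N ≤ m → l m = 0) {i j : ℕ} :
    j < l i ↔ gS l j < bS l i := by
  constructor
  · exact gS_lt_bS hl hz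
  · intro h
    by_contra hc
    push_neg at hc
    have := bS_lt_gS hl hz hc
    omega

lemma bS_ne_gS (hl : Antitone l) (hz : ∀ m, N ≤ m → l m = 0) (i j : ℕ) :
    bS l i ≠ gS l j := by
  rcases lt_or_ge j (l i) with h | h
  · have := gS_lt_bS hl hz h; omega
  · have := bS_lt_gS hl hz h; omega

lemma gS_notMem_BSet (hl : Antitone l) (hz : ∀ m, N ≤ m → l m = 0) (j : ℕ) :
    gS l j ∉ BSet l := by
  rintro ⟨i, hi⟩
  exact bS_ne_gS hl hz i j hi

/-- Every integer is either a `bS` value or a `gS` value. -/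
lemma cover (hl : Antitone l) (hz : ∀ m, N ≤ m → l m = 0) (n : ℤ) :
    (∃ i, bS l i = n) ∨ (∃ j, gS l j = n) := by
  by_cases hb : ∃ i, bS l i = n
  · exact Or.inl hb
  right
  push_neg at hb
  rcases lt_or_ge (l 0 : ℤ) n with h0 | h0
  · -- n > l 0 : take j = n - 1
    refine ⟨(n - 1).toNat, ?_⟩
    have hn1 : (0:ℤ) ≤ n - 1 := by
      have : (0:ℤ) ≤ (l 0 : ℤ) := Int.natCast_nonneg _
      omega
    have hj : ((n - 1).toNat : ℤ) = n - 1 := Int.toNat_of_nonneg hn1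
    have hcl : colLen l (n - 1).toNat = 0 := by
      apply Nat.le_antisymm _ (Nat.zero_le _)
      apply Nat.sInf_le
      simp only [Set.mem_setOf_eq]
      omega
    unfold gS
    rw [hcl, hj]
    simp
  · -- n ≤ l 0 = bS l 0
    set P : ℕ → Prop := fun i => n ≤ bS l i with hP
    have hP0 : P 0 := by simp only [hP, bS]; simpa using h0
    have hbound : ∀ i, P i → i ≤ N + n.natAbs := by
      intro i hi
      by_contra hc
      push_neg at hc
      have hzi : l i = 0 := hz i (by omega)
      simp only [hP, bS] at hi
      rw [hzi] at hi
      simp only [Nat.cast_zero, zero_sub] at hi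
      have : (i : ℤ) ≤ -n := by omega
      have h2 : (i : ℤ) ≤ n.natAbs := le_trans this (by
        rcases Int.natAbs_eq n with h | h <;> omega)
      have := (Nat.cast_le (α := ℤ)).mp h2
      omega
    classical
    set M := N + n.natAbs
    set i0 := Nat.findGreatest P M with hi0
    have hPi0 : P i0 := Nat.findGreatest_spec (Nat.zero_le M) hP0
    have hnot : ¬ P (i0 + 1) := by
      by_cases hle : i0 + 1 ≤ M
      · exact Nat.findGreatest_is_greatest (Nat.lt_succ_self i0) hle
      · intro hp
        exact hle (le_trans (hbound _ hp) le_rfl)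
    have hne : bS l i0 ≠ n := hb i0
    have hlt : n < bS l i0 := lt_of_le_of_ne hPi0 (Ne.symm hne)
    simp only [hP, bS] at hnot hlt
    push_neg at hnot
    -- l (i0+1) ≤ n + i0 < l i0
    have h1 : (l (i0 + 1) : ℤ) ≤ n + i0 := by push_cast at hnot ⊢; omega
    have h2 : n + (i0:ℤ) < l i0 := by omega
    have hnn : (0:ℤ) ≤ n + i0 := le_trans (Int.natCast_nonneg _) h1
    refine ⟨(n + i0).toNat, ?_⟩
    have hj : ((n + i0).toNat : ℤ) = n + i0 := Int.toNat_of_nonneg hnn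
    have hc1 : i0 < colLen l (n + i0).toNat := by
      rw [← lt_colLen_iff hl hz]
      omega
    have hc2 : colLen l (n + i0).toNat ≤ i0 + 1 := by
      apply Nat.sInf_le
      simp only [Set.mem_setOf_eq]
      omega
    have hc : colLen l (n + i0).toNat = i0 + 1 := by omega
    unfold gS
    rw [hc, hj]
    push_cast
    ring

end Basic

end PMapAux
namespace PMapAux

section Hook

variable {k : ℕ} {l : ℕ → ℕ} {N : ℕ}

lemma hook_eq (hl : Antitone l) (hz : ∀ m, N ≤ m → l m = 0) {i j : ℕ}
    (h : j < l i) : (hook l i j : ℤ) = bS l i - gS l j := by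
  have hcard : Nat.card {i' : ℕ // i < i' ∧ j < l i'} = colLen l j - (i + 1) := by
    have e : {i' : ℕ // i < i' ∧ j < l i'} ≃ (Set.Ioo i (colLen l j)) :=
      Equiv.subtypeEquivRight (fun x => by
        simp only [Set.mem_Ioo]
        constructor
        · rintro ⟨h1, h2⟩; exact ⟨h1, (lt_colLen_iff hl hz).1 h2⟩
        · rintro ⟨h1, h2⟩; exact ⟨h1, (lt_colLen_iff hl hz).2 h2⟩)
    rw [Nat.card_congr e, Nat.card_eq_card_toFinset]
    simp only [Set.toFinset_Ioo, Nat.card_Ioo]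
    omega
  have hcl : i + 1 ≤ colLen l j := (lt_colLen_iff hl hz).1 h
  unfold hook
  rw [hcard]
  unfold bS gS
  push_cast [Nat.cast_sub (le_of_lt h), Nat.cast_sub hcl]
  omega

lemma hook_pos {i j : ℕ} (h : j < l i) : 1 ≤ hook l i j := by
  unfold hook
  have : 1 ≤ l i - j := by omega
  omega

open scoped Classical in
lemma pMap_window (hl : Antitone l) (hz : ∀ m, N ≤ m → l m = 0) (k i : ℕ) :
    pMap k l i =
      ((Finset.Icc (bS l i - k) (bS l i - 1)).filter
        (fun m => m ∉ BSet l)).card := by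
  classical
  unfold pMap
  apply Finset.card_bij (fun j _ => gS l j)
  · intro j hj
    simp only [Finset.mem_filter, Finset.mem_range] at hj
    obtain ⟨hj1, hj2⟩ := hj
    have hhk : (hook l i j : ℤ) = bS l i - gS l j := hook_eq hl hz hj1
    have h1 : 1 ≤ hook l i j := hook_pos hj1
    simp only [Finset.mem_filter, Finset.mem_Icc]
    refine ⟨⟨?_, ?_⟩, gS_notMem_BSet hl hz j⟩
    · have : (hook l i j : ℤ) ≤ k := by exact_mod_cast hj2
      omega
    · have : (1:ℤ) ≤ hook l i j := by exact_mod_cast h1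
      omega
  · intro a ha b hb hab
    exact (gS_strictMono hz).injective hab
  · intro m hm
    simp only [Finset.mem_filter, Finset.mem_Icc] at hm
    obtain ⟨⟨hm1, hm2⟩, hm3⟩ := hm
    rcases cover hl hz m with ⟨i', hi'⟩ | ⟨j, hj⟩
    · exact absurd ⟨i', hi'⟩ hm3
    have hcell : j < l i := by
      rw [lt_iff_cell hl hz]
      omega
    refine ⟨j, ?_, hj⟩
    simp only [Finset.mem_filter, Finset.mem_range]
    refine ⟨hcell, ?_⟩
    have hhk : (hook l i j : ℤ) = bS l i - gS l j := hook_eq hl hz hcell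
    have : (hook l i j : ℤ) ≤ k := by omega
    exact_mod_cast this

/-- A core's `BSet` is closed under subtracting `k+1`. -/
lemma core_closure (hl : Antitone l) (hz : ∀ m, N ≤ m → l m = 0)
    (hc : ∀ i j, j < l i → hook l i j ≠ k + 1) :
    ∀ n ∈ BSet l, n - (k + 1) ∈ BSet l := by
  rintro n ⟨i, rfl⟩
  by_contra hn
  rcases cover hl hz (bS l i - (k+1)) with ⟨i', hi'⟩ | ⟨j, hj⟩
  · exact hn ⟨i', hi'⟩
  have hcell : j < l i := by
    rw [lt_iff_cell hl hz]
    omega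
  apply hc i j hcell
  have hhk : (hook l i j : ℤ) = bS l i - gS l j := hook_eq hl hz hcell
  have : (hook l i j : ℤ) = (k : ℤ) + 1 := by omega
  exact_mod_cast this

/-- Conversely, closure of the `BSet` implies no hooks of size `k+1`. -/
lemma closure_core (hl : Antitone l) (hz : ∀ m, N ≤ m → l m = 0)
    (hcl : ∀ n ∈ BSet l, n - (k + 1) ∈ BSet l) :
    ∀ i j, j < l i → hook l i j ≠ k + 1 := by
  intro i j hcell hhook
  have hhk : (hook l i j : ℤ) = bS l i - gS l j := hook_eq hl hz hcell
  have : gS l j = bS l i - (k + 1) := by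
    rw [hhook] at hhk
    push_cast at hhk
    omega
  have hb := hcl (bS l i) ⟨i, rfl⟩
  rw [← this] at hb
  exact gS_notMem_BSet hl hz j hb

lemma closure_iter (hcl : ∀ n ∈ BSet l, n - (k + 1) ∈ BSet l) :
    ∀ (s : ℕ), ∀ n ∈ BSet l, n - s * (k + 1) ∈ BSet l := by
  intro s
  induction s with
  | zero => intro n hn; simpa using hn
  | succ s ih =>
      intro n hn
      have := hcl _ (ih n hn)
      have he : n - s * (k+1) - (k+1) = n - (s+1) * (k+1) := by ring
      rwa [he] at this

lemma closure_of_dvd (hcl : ∀ n ∈ BSet l, n - (k + 1) ∈ BSet l)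
    {n m : ℤ} (hn : n ∈ BSet l) (hm : m ≤ n) (hd : ((k:ℤ) + 1) ∣ (n - m)) :
    m ∈ BSet l := by
  obtain ⟨s, hs⟩ := hd
  have hk1 : (0:ℤ) < (k:ℤ) + 1 := by positivity
  have hs0 : 0 ≤ s := by
    by_contra hc
    push_neg at hc
    have h2 : ((k:ℤ)+1) * s < 0 := mul_neg_of_pos_of_neg hk1 hc
    linarith
  lift s to ℕ using hs0 with s
  have h2 := closure_iter hcl s n hn
  rwa [show n - (s:ℤ) * ((k:ℤ)+1) = m from by linarith] at h2

end Hook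

end PMapAux
namespace PMapAux

def SRow (k : ℕ) (l : ℕ → ℕ) (r0 : ZMod (k + 1)) (i : ℕ) : Prop :=
  ∃ j, IsRemovableCorner l i j ∧ residue k i j = r0

def MoveP (k : ℕ) (l : ℕ → ℕ) (r0 : ZMod (k + 1)) (n : ℤ) : Prop :=
  n ∈ BSet l ∧ n - 1 ∉ BSet l ∧ ((n - 1 : ℤ) : ZMod (k + 1)) = r0

set_option linter.unusedSectionVars false

section Rows

variable {k : ℕ} {l l' : ℕ → ℕ} {r0 : ZMod (k + 1)}

lemma sRow_iff (hl : Antitone l) {i : ℕ} :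
    SRow k l r0 i ↔ MoveP k l r0 (bS l i) := by
  constructor
  · rintro ⟨j, ⟨hj1, hj2⟩, hres⟩
    have hb1 : bS l i - 1 = (j : ℤ) - i := by unfold bS; omega
    refine ⟨⟨i, rfl⟩, ?_, ?_⟩
    · rintro ⟨i', hi'⟩
      rcases le_or_gt i' i with h | h
      · have := (bS_strictAnti hl).antitone h
        omega
      · have h2 : i + 1 ≤ i' := h
        have := (bS_strictAnti hl).antitone h2
        have hb2 : bS l (i+1) ≤ (j:ℤ) - i - 1 := by
          unfold bS; push_cast; omega
        omega
    · rw [hb1, ← hres]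
      unfold residue
      push_cast
      ring
  · rintro ⟨-, hnb, hres⟩
    have hne : l (i+1) < l i := by
      rcases lt_or_ge (l (i+1)) (l i) with h | h
      · exact h
      · exfalso
        have he : l (i+1) = l i := le_antisymm (hl (by omega : i ≤ i + 1)) h
        exact hnb ⟨i+1, by unfold bS; push_cast; omega⟩
    refine ⟨l i - 1, ⟨by omega, by omega⟩, ?_⟩
    have hb1 : bS l i - 1 = ((l i - 1 : ℕ) : ℤ) - i := by
      unfold bS; push_cast [Nat.cast_sub (by omega : 1 ≤ l i)]; omega
    rw [← hres, hb1]
    unfold residue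
    push_cast [Nat.cast_sub (by omega : 1 ≤ l i)]
    ring

variable (hl : Antitone l)
    (hyes : ∀ i, SRow k l r0 i → l' i + 1 = l i)
    (hno : ∀ i, ¬ SRow k l r0 i → l' i = l i)

include hl hyes hno

lemma bS'_yes {i : ℕ} (h : SRow k l r0 i) : bS l' i = bS l i - 1 := by
  have := hyes i h
  unfold bS
  omega

lemma bS'_no {i : ℕ} (h : ¬ SRow k l r0 i) : bS l' i = bS l i := by
  have := hno i h
  unfold bS
  omega

lemma l'_le (i : ℕ) : l' i ≤ l i := by
  by_cases h : SRow k l r0 i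
  · have := hyes i h; omega
  · have := hno i h; omega

lemma l'_antitone : Antitone l' := by
  apply antitone_nat_of_succ_le
  intro i
  by_cases h : SRow k l r0 i
  · have h2 := hyes i h
    obtain ⟨j, ⟨hj1, hj2⟩, -⟩ := h
    have h3 := l'_le hl hyes hno (i+1)
    omega
  · have h2 := hno i h
    have h3 := l'_le hl hyes hno (i+1)
    have := hl (by omega : i ≤ i + 1)
    omega

lemma l'_zero {N : ℕ} (hz : ∀ m, N ≤ m → l m = 0) :
    ∀ m, N ≤ m → l' m = 0 := by
  intro m hm
  have := l'_le hl hyes hno m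
  have := hz m hm
  omega

lemma mem_BSet' (n : ℤ) :
    n ∈ BSet l' ↔ (MoveP k l r0 (n + 1) ∨ (n ∈ BSet l ∧ ¬ MoveP k l r0 n)) := by
  constructor
  · rintro ⟨i, rfl⟩
    by_cases h : SRow k l r0 i
    · left
      rw [bS'_yes hl hyes hno h]
      rw [sub_add_cancel]
      exact (sRow_iff hl).1 h
    · right
      rw [bS'_no hl hyes hno h]
      exact ⟨⟨i, rfl⟩, fun hm => h ((sRow_iff hl).2 hm)⟩
  · rintro (hm | ⟨⟨i, rfl⟩, hnm⟩)
    · obtain ⟨i, hi⟩ := hm.1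
      rw [← hi] at hm
      have hS : SRow k l r0 i := (sRow_iff hl).2 hm
      exact ⟨i, by rw [bS'_yes hl hyes hno hS, hi]; ring⟩
    · exact ⟨i, bS'_no hl hyes hno (fun hS => hnm ((sRow_iff hl).1 hS))⟩

end Rows

end PMapAux
namespace PMapAux

section Closure

variable {k : ℕ} {l l' : ℕ → ℕ} {r0 : ZMod (k + 1)}

lemma cast_eq_iff_dvd {x y : ℤ} :
    ((x : ZMod (k+1)) = (y : ZMod (k+1))) ↔ ((k:ℤ)+1) ∣ (y - x) := by
  rw [ZMod.intCast_eq_intCast_iff, Int.modEq_iff_dvd]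
  norm_cast

lemma kz : ((k : ZMod (k+1)) + 1 : ZMod (k+1)) = 0 := by
  have := ZMod.natCast_self (k+1)
  push_cast at this
  exact this

variable (hk : 1 ≤ k) (hl : Antitone l)
    (hcl : ∀ n ∈ BSet l, n - ((k:ℤ) + 1) ∈ BSet l)
    (hyes : ∀ i, SRow k l r0 i → l' i + 1 = l i)
    (hno : ∀ i, ¬ SRow k l r0 i → l' i = l i)

include hk hl hcl hyes hno

lemma BSet'_closure :
    ∀ n ∈ BSet l', n - ((k:ℤ) + 1) ∈ BSet l' := by
  haveI : Fact (1 < k + 1) := ⟨by omega⟩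
  have hkz : ((k : ZMod (k+1)) + 1 : ZMod (k+1)) = 0 := kz
  intro n hn
  rw [mem_BSet' hl hyes hno] at hn ⊢
  rcases hn with hm | ⟨hB, hnm⟩
  · obtain ⟨h1, h2, h3⟩ := hm
    have h3' : ((n : ℤ) : ZMod (k+1)) = r0 := by
      rw [← h3]; norm_num
    have h4 : n - (k:ℤ) ∈ BSet l := by
      have := hcl _ h1
      convert this using 1; ring
    by_cases h5 : n - (k:ℤ) - 1 ∈ BSet l
    · right
      constructor
      · convert h5 using 1; ring
      rintro ⟨-, -, hres⟩
      push_cast at hres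
      have : (1 : ZMod (k+1)) = 0 := by linear_combination h3' - hres - hkz
      exact one_ne_zero this
    · left
      have he : n - ((k:ℤ)+1) + 1 = n - k := by ring
      rw [he]
      refine ⟨h4, h5, ?_⟩
      push_cast
      linear_combination h3' - hkz
  · right
    refine ⟨hcl n hB, ?_⟩
    rintro ⟨h1, h2, h3⟩
    have hres1 : ((n - 1 : ℤ) : ZMod (k+1)) = r0 := by
      push_cast at h3 ⊢
      linear_combination h3 + hkz
    have hn1 : n - 1 ∈ BSet l := by
      by_contra h4
      exact hnm ⟨hB, h4, hres1⟩
    have := hcl _ hn1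
    apply h2
    convert this using 1; ring

end Closure

end PMapAux
namespace PMapAux

section Count

open scoped Classical

variable {k : ℕ} {l l' : ℕ → ℕ} {r0 : ZMod (k + 1)} {N : ℕ}

variable (hk : 1 ≤ k) (hl : Antitone l) (hz : ∀ m, N ≤ m → l m = 0)
    (hcl : ∀ n ∈ BSet l, n - ((k:ℤ) + 1) ∈ BSet l)
    (hyes : ∀ i, SRow k l r0 i → l' i + 1 = l i)
    (hno : ∀ i, ¬ SRow k l r0 i → l' i = l i)

include hk hl hz hcl hyes hno

lemma pMap_eq_of_not_sRow {i : ℕ} (hS : ¬ SRow k l r0 i) :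
    pMap k l' i = pMap k l i := by
  have hl' := l'_antitone hl hyes hno
  have hz' := l'_zero hl hyes hno hz
  rw [pMap_window hl' hz' k i, pMap_window hl hz k i, bS'_no hl hyes hno hS]
  set a := bS l i with ha
  set W := Finset.Icc (a - k) (a - 1) with hW
  have hcompl : ∀ (B : Set ℤ),
      (W.filter (fun m => m ∉ B)).card = W.card - (W.filter (fun m => m ∈ B)).card := by
    intro B
    have := Finset.card_filter_add_card_filter_not (s := W)
      (p := fun m => m ∈ B)
    omega
  rw [hcompl, hcompl]
  congr 1
  have d1 : ∀ m : ℤ, MoveP k l r0 (m+1) → m ∉ BSet l := by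
    intro m h
    have := h.2.1
    simpa using this
  have e1 : W.filter (fun m => m ∈ BSet l')
      = (W.filter (fun m => MoveP k l r0 (m+1)))
        ∪ (W.filter (fun m => m ∈ BSet l ∧ ¬ MoveP k l r0 m)) := by
    rw [← Finset.filter_or]
    apply Finset.filter_congr
    intro m _
    exact mem_BSet' hl hyes hno m
  have e2 : W.filter (fun m => m ∈ BSet l)
      = (W.filter (fun m => MoveP k l r0 m))
        ∪ (W.filter (fun m => m ∈ BSet l ∧ ¬ MoveP k l r0 m)) := by
    rw [← Finset.filter_or]
    apply Finset.filter_congr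
    intro m _
    constructor
    · intro h
      by_cases hM : MoveP k l r0 m
      · exact Or.inl hM
      · exact Or.inr ⟨h, hM⟩
    · rintro (h | h)
      · exact h.1
      · exact h.1
  rw [e1, e2, Finset.card_union_of_disjoint, Finset.card_union_of_disjoint]
  · congr 1
    apply Finset.card_bij (fun m _ => m + 1)
    · intro m hm
      simp only [Finset.mem_filter, hW, Finset.mem_Icc] at hm ⊢
      obtain ⟨⟨hm1, hm2⟩, hm3⟩ := hm
      refine ⟨⟨by omega, ?_⟩, hm3⟩
      by_contra hc
      have hma : m = a - 1 := by omega
      have : MoveP k l r0 a := by rwa [hma, sub_add_cancel] at hm3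
      exact hS ((sRow_iff hl).2 this)
    · intro x hx y hy h
      omega
    · intro m hm
      simp only [Finset.mem_filter, hW, Finset.mem_Icc] at hm
      obtain ⟨⟨hm1, hm2⟩, hm3⟩ := hm
      refine ⟨m - 1, ?_, by ring⟩
      simp only [Finset.mem_filter, hW, Finset.mem_Icc]
      refine ⟨⟨?_, by omega⟩, by rwa [sub_add_cancel]⟩
      by_contra hc
      have hma : m = a - k := by omega
      apply hm3.2.1
      have := hcl a ⟨i, rfl⟩
      have he : a - ((k:ℤ)+1) = m - 1 := by omega
      rwa [he] at this
  · rw [Finset.disjoint_filter]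
    intro m _ h1 h2
    first
      | exact h2.2 h1
      | exact absurd h2.1 (d1 m h1)
  · rw [Finset.disjoint_filter]
    intro m _ h1 h2
    first
      | exact h2.2 h1
      | exact absurd h2.1 (d1 m h1)

lemma pMap_of_sRow {i : ℕ} (hS : SRow k l r0 i) :
    pMap k l i
        = ((Finset.Icc (bS l i - k) (bS l i - 2)).filter (fun m => m ∉ BSet l)).card + 1
    ∧ pMap k l' i
        = ((Finset.Icc (bS l i - k) (bS l i - 2)).filter (fun m => m ∉ BSet l)).card
          + (if bS l i - ((k:ℤ)+1) ∈ BSet l' then 0 else 1) := by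
  have hl' := l'_antitone hl hyes hno
  have hz' := l'_zero hl hyes hno hz
  have hM : MoveP k l r0 (bS l i) := (sRow_iff hl).1 hS
  set a := bS l i with ha
  constructor
  · rw [pMap_window hl hz k i]
    have hsplit : Finset.Icc (a - k) (a - 1)
        = insert (a - 1) (Finset.Icc (a - k) (a - 2)) := by
      ext x
      simp only [Finset.mem_Icc, Finset.mem_insert]
      omega
    rw [hsplit, Finset.filter_insert, if_pos hM.2.1,
      Finset.card_insert_of_notMem]
    intro hc
    simp only [Finset.mem_filter, Finset.mem_Icc] at hc
    omega
  · rw [pMap_window hl' hz' k i, bS'_yes hl hyes hno hS]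
    have hsplit2 : Finset.Icc (a - 1 - k) (a - 1 - 1)
        = insert (a - ((k:ℤ)+1)) (Finset.Icc (a - k) (a - 2)) := by
      ext x
      simp only [Finset.mem_Icc, Finset.mem_insert]
      omega
    have hshared : (Finset.Icc (a - (k:ℤ)) (a - 2)).filter (fun m => m ∉ BSet l')
        = (Finset.Icc (a - (k:ℤ)) (a - 2)).filter (fun m => m ∉ BSet l) := by
      apply Finset.filter_congr
      intro m hm
      simp only [Finset.mem_Icc] at hm
      have hmem : m ∈ BSet l' ↔ m ∈ BSet l := by
        rw [mem_BSet' hl hyes hno]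
        constructor
        · rintro (hmv | ⟨h1, -⟩)
          · exfalso
            obtain ⟨-, -, h3⟩ := hmv
            have h4 := hM.2.2
            have hd : ((m + 1 - 1 : ℤ) : ZMod (k+1)) = ((a - 1 : ℤ) : ZMod (k+1)) := by
              rw [h3, h4]
            rw [cast_eq_iff_dvd] at hd
            have hpos : 0 < (a - 1) - (m + 1 - 1) := by omega
            have := Int.le_of_dvd hpos hd
            omega
          · exact h1
        · intro h1
          right
          refine ⟨h1, ?_⟩
          rintro ⟨-, -, h3⟩
          have h4 := hM.2.2
          have hd : ((m - 1 : ℤ) : ZMod (k+1)) = ((a - 1 : ℤ) : ZMod (k+1)) := by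
            rw [h3, h4]
          rw [cast_eq_iff_dvd] at hd
          have hpos : 0 < (a - 1) - (m - 1) := by omega
          have := Int.le_of_dvd hpos hd
          omega
      exact not_congr hmem
    rw [hsplit2, Finset.filter_insert]
    by_cases hin : a - ((k:ℤ)+1) ∈ BSet l'
    · rw [if_neg (by simpa using hin), hshared, if_pos hin]
      omega
    · rw [if_pos hin, if_neg hin, Finset.card_insert_of_notMem, hshared]
      intro hc
      simp only [Finset.mem_filter, Finset.mem_Icc] at hc
      omega

end Count

end PMapAux

open PMapAux

/-- removing all removable corners of `(k+1)`-residue `r0` from a `(k+1)`-core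
`l` yields a `(k+1)`-core `l'` with `p(l')` obtained from `p(l)` by decreasing the entry in
row `r` (the largest row with such a corner) by one. -/
theorem pMap_removeResidue
    (k : ℕ) (hk : 1 ≤ k) (l : ℕ → ℕ) (hcore : IsCore k l)
    (r0 : ZMod (k + 1)) (r : ℕ)
    (hr : ∃ j, IsRemovableCorner l r j ∧ residue k r j = r0)
    (hrmax : ∀ r', r < r' → ¬ ∃ j, IsRemovableCorner l r' j ∧ residue k r' j = r0)
    (l' : ℕ → ℕ)
    (hl'yes : ∀ i, (∃ j, IsRemovableCorner l i j ∧ residue k i j = r0) → l' i + 1 = l i)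
    (hl'no : ∀ i, ¬ (∃ j, IsRemovableCorner l i j ∧ residue k i j = r0) → l' i = l i) :
    IsCore k l' ∧ pMap k l' r + 1 = pMap k l r ∧
      ∀ i, i ≠ r → pMap k l' i = pMap k l i := by
  classical
  obtain ⟨⟨hl, N, hz⟩, hnohook⟩ := hcore
  haveI : Fact (1 < k + 1) := ⟨by omega⟩
  have hkz : ((k : ZMod (k+1)) + 1 : ZMod (k+1)) = 0 := kz
  have hyes : ∀ i, SRow k l r0 i → l' i + 1 = l i := hl'yes
  have hno : ∀ i, ¬ SRow k l r0 i → l' i = l i := hl'no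
  have hcl : ∀ n ∈ BSet l, n - ((k:ℤ)+1) ∈ BSet l :=
    core_closure hl hz hnohook
  have hl'a := l'_antitone hl hyes hno
  have hz' := l'_zero hl hyes hno hz
  have hcl' := BSet'_closure hk hl hcl hyes hno
  have hSr : SRow k l r0 r := hr
  have hMr : MoveP k l r0 (bS l r) := (sRow_iff hl).1 hSr
  refine ⟨⟨⟨hl'a, N, hz'⟩, closure_core hl'a hz' hcl'⟩, ?_, ?_⟩
  · -- row r
    obtain ⟨h1, h2⟩ := pMap_of_sRow hk hl hz hcl hyes hno hSr
    have hin : bS l r - ((k:ℤ)+1) ∈ BSet l' := by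
      rw [mem_BSet' hl hyes hno]
      right
      refine ⟨hcl _ ⟨r, rfl⟩, ?_⟩
      intro hMv
      obtain ⟨i', hi'⟩ := hMv.1
      rw [← hi'] at hMv
      have hlt : bS l i' < bS l r := by rw [hi']; omega
      have hgt : r < i' := by
        by_contra hc
        push_neg at hc
        have := (bS_strictAnti hl).antitone hc
        omega
      exact hrmax i' hgt ((sRow_iff hl).2 hMv)
    rw [h1, h2, if_pos hin]
  · intro i hir
    by_cases hSi : SRow k l r0 i
    · have hilt : i < r := by
        rcases lt_or_gt_of_ne hir with h | h
        · exact h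
        · exact absurd hSi (hrmax i h)
      have hMi : MoveP k l r0 (bS l i) := (sRow_iff hl).1 hSi
      obtain ⟨h1, h2⟩ := pMap_of_sRow hk hl hz hcl hyes hno hSi
      have hdvd : ((k:ℤ)+1) ∣ (bS l i - bS l r) := by
        have h4 := hMr.2.2
        have h5 := hMi.2.2
        have := (cast_eq_iff_dvd (k := k)).1 (h4.trans h5.symm)
        have he : bS l i - 1 - (bS l r - 1) = bS l i - bS l r := by ring
        rwa [he] at this
      have hblt : bS l r < bS l i := bS_strictAnti hl hilt
      have hge : bS l r + ((k:ℤ)+1) ≤ bS l i := by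
        obtain ⟨s, hs⟩ := hdvd
        have hs1 : 1 ≤ s := by
          by_contra hc
          push_neg at hc
          have : ((k:ℤ)+1) * s ≤ 0 :=
            mul_nonpos_of_nonneg_of_nonpos (by positivity) (by omega)
          omega
        nlinarith
      have hnin : bS l i - ((k:ℤ)+1) ∉ BSet l' := by
        rw [mem_BSet' hl hyes hno]
        push_neg
        constructor
        · rintro ⟨-, -, h3⟩
          have h4 := hMi.2.2
          have hd := (cast_eq_iff_dvd (k := k)).1 (h3.trans h4.symm)
          have he : bS l i - 1 - (bS l i - ((k:ℤ)+1) + 1 - 1) = (k:ℤ) := by ring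
          rw [he] at hd
          have hkpos : (0:ℤ) < (k:ℤ) := by exact_mod_cast hk
          have := Int.le_of_dvd hkpos hd
          omega
        · intro hb
          refine ⟨hcl _ ⟨i, rfl⟩, ?_, ?_⟩
          · intro hmem
            have hle : bS l r - 1 ≤ bS l i - ((k:ℤ)+1) - 1 := by omega
            have hd2 : ((k:ℤ)+1) ∣ (bS l i - ((k:ℤ)+1) - 1 - (bS l r - 1)) := by
              have he : bS l i - ((k:ℤ)+1) - 1 - (bS l r - 1)
                  = (bS l i - bS l r) - ((k:ℤ)+1) := by ring
              rw [he]
              exact dvd_sub hdvd dvd_rfl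
            have := closure_of_dvd hcl hmem hle hd2
            exact hMr.2.1 this
          · have h5 := hMi.2.2
            push_cast at h5 ⊢
            linear_combination h5 - hkz
      rw [h1, h2, if_neg hnin]
    · exact pMap_eq_of_not_sRow hk hl hz hcl hyes hno hSi
end

section
/- Let k ≥ 1, let γ be a (k+1)-core with exactly ℓ nonempty rows, and let λ = p(γ). Then for every 1 ≤ i ≤ ℓ, the number of distinct (k+1)-residues occurring among the top cells of γ lying in rows i, i+1, …, ℓ equals λ_i. -/
section Aux

variable {k : ℕ} {l : ℕ → ℕ} {L : ℕ}

/-- content of the end of row `a` -/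
def dI (l : ℕ → ℕ) (a : ℕ) : ℤ := (l a : ℤ) - a

/-- number of rows of length `> j` -/
def mcol (l : ℕ → ℕ) (L j : ℕ) : ℕ :=
  ((Finset.range L).filter (fun a => j < l a)).card

lemma dI_add_le (hanti : Antitone l) {a b : ℕ} (h : a ≤ b) :
    dI l b + ((b : ℤ) - a) ≤ dI l a := by
  have h2 : l b ≤ l a := hanti h
  simp only [dI]; omega

lemma lt_iff_lt_mcol (hanti : Antitone l) (hLz : ∀ m, m < L ↔ 0 < l m) (a j : ℕ) :
    j < l a ↔ a < mcol l L j := by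
  constructor
  · intro h
    have hsub : Finset.range (a+1) ⊆ (Finset.range L).filter (fun x => j < l x) := by
      intro x hx
      simp only [Finset.mem_range] at hx
      have hlx : l a ≤ l x := hanti (by omega)
      simp only [Finset.mem_filter, Finset.mem_range]
      exact ⟨(hLz x).2 (by omega), by omega⟩
    have h2 := Finset.card_le_card hsub
    simp only [Finset.card_range] at h2
    exact lt_of_lt_of_le (Nat.lt_succ_self a) h2
  · intro h
    by_contra hc
    push_neg at hc
    have hsub : (Finset.range L).filter (fun x => j < l x) ⊆ Finset.range a := by
      intro x hx
      simp only [Finset.mem_filter, Finset.mem_range] at hx ⊢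
      by_contra hxa
      push_neg at hxa
      have := hanti hxa
      omega
    have h2 := Finset.card_le_card hsub
    simp only [Finset.card_range] at h2
    simp only [mcol] at h
    omega

lemma hook_eq_int (hanti : Antitone l) (hLz : ∀ m, m < L ↔ 0 < l m)
    {a j : ℕ} (h : j < l a) :
    (hook l a j : ℤ) = dI l a - ((j:ℤ) + 1 - mcol l L j) := by
  have hm : a < mcol l L j := (lt_iff_lt_mcol hanti hLz a j).1 h
  have hset : {i' : ℕ | a < i' ∧ j < l i'} = ↑(Finset.Ioo a (mcol l L j)) := by
    ext x
    simp only [Set.mem_setOf_eq, Finset.coe_Ioo, Set.mem_Ioo]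
    rw [lt_iff_lt_mcol hanti hLz x j]
  have h1 : Nat.card {i' : ℕ // a < i' ∧ j < l i'} = Set.ncard {i' : ℕ | a < i' ∧ j < l i'} :=
    Nat.card_coe_set_eq _
  rw [hset, Set.ncard_coe_finset, Nat.card_Ioo] at h1
  simp only [hook, h1, dI]
  omega

lemma exists_dle (hanti : Antitone l) (c : ℤ) : ∃ n : ℕ, dI l n ≤ c := by
  refine ⟨l 0 + c.natAbs, ?_⟩
  have h2 : l (l 0 + c.natAbs) ≤ l 0 := hanti (by omega)
  simp only [dI]; omega

lemma exists_g (hanti : Antitone l) (hLz : ∀ m, m < L ↔ 0 < l m)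
    {c : ℤ} (hc : ∀ a, dI l a ≠ c) :
    ∃ j : ℕ, (j:ℤ) + 1 - mcol l L j = c := by
  have hex := exists_dle hanti c
  set q := Nat.find hex with hqdef
  have hq : dI l q ≤ c := Nat.find_spec hex
  have hlt : ∀ a, a < q → c < dI l a := fun a ha => lt_of_not_ge (Nat.find_min hex ha)
  have hq1 : 1 ≤ c + q := by
    by_cases hc0 : 1 ≤ c
    · have hq0 : (0:ℤ) ≤ (q:ℤ) := Int.natCast_nonneg q
      omega
    · have h2 : (-c).toNat < q := by
        rw [hqdef, Nat.lt_find_iff]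
        intro m hm hP
        have h3 := hc m
        simp only [dI] at hP h3
        omega
      omega
  refine ⟨(c - 1 + q).toNat, ?_⟩
  have hj : ((c - 1 + q).toNat : ℤ) = c - 1 + q := by omega
  set j := (c - 1 + q).toNat with hjdef
  have hmq : mcol l L j = q := by
    have hfil : (Finset.range L).filter (fun a => j < l a) = Finset.range q := by
      ext a
      simp only [Finset.mem_filter, Finset.mem_range]
      constructor
      · rintro ⟨haL, hja⟩
        by_contra hqa
        push_neg at hqa
        have h1 := dI_add_le hanti hqa
        have h2 := hc q
        simp only [dI] at h1 hq h2
        omega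
      · intro haq
        have h2 := dI_add_le hanti (show a ≤ q - 1 by omega)
        have h3 := hlt (q-1) (by omega)
        simp only [dI] at h2 h3
        have hja : j < l a := by omega
        exact ⟨(hLz a).2 (by omega), hja⟩
    simp only [mcol, hfil, Finset.card_range]
  rw [hmq]; omega

lemma exists_cell (hanti : Antitone l) (hLz : ∀ m, m < L ↔ 0 < l m)
    {i : ℕ} {c : ℤ} (hc : ∀ a, dI l a ≠ c) (hci : c < dI l i) :
    ∃ j : ℕ, j < l i ∧ (j:ℤ) + 1 - mcol l L j = c := by
  obtain ⟨j, hj⟩ := exists_g hanti hLz hc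
  refine ⟨j, ?_, hj⟩
  by_contra hli
  push_neg at hli
  have hsub : (Finset.range L).filter (fun a => j < l a) ⊆ Finset.range i := by
    intro x hx
    simp only [Finset.mem_filter, Finset.mem_range] at hx ⊢
    by_contra hxi; push_neg at hxi
    have := hanti hxi; omega
  have hm : mcol l L j ≤ i := by
    have h2 := Finset.card_le_card hsub
    simp only [Finset.card_range] at h2
    simpa [mcol] using h2
  simp only [dI] at hci
  omega

lemma core_closed (hcore : IsCore k l) (hLz : ∀ m, m < L ↔ 0 < l m)
    {c : ℤ} (h : ∃ a, dI l a = c) :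
    ∃ a, dI l a = c - (k+1) := by
  have hanti : Antitone l := hcore.1.1
  have hhook := hcore.2
  obtain ⟨a, ha⟩ := h
  by_cases hla : l a = 0
  · refine ⟨a + k + 1, ?_⟩
    have h2 : l (a + k + 1) ≤ l a := hanti (by omega)
    simp only [dI] at ha ⊢
    push_cast
    omega
  · by_contra hnot
    push_neg at hnot
    have hci : c - (k+1) < dI l a := by omega
    obtain ⟨j, hjl, hgj⟩ := exists_cell hanti hLz hnot hci
    have hhe := hook_eq_int hanti hLz hjl (L := L)
    have h3 : (hook l a j : ℤ) = (k : ℤ) + 1 := by rw [hhe, hgj]; omega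
    exact hhook a j hjl (by exact_mod_cast h3)

lemma g_notin (hanti : Antitone l) (hLz : ∀ m, m < L ↔ 0 < l m) {j : ℕ} :
    ∀ a, dI l a ≠ (j:ℤ) + 1 - mcol l L j := by
  intro a heq
  by_cases ham : a < mcol l L j
  · have hja : j < l a := (lt_iff_lt_mcol hanti hLz a j).2 ham
    simp only [dI] at heq
    omega
  · have h2 : ¬ j < l a := fun h => ham ((lt_iff_lt_mcol hanti hLz a j).1 h)
    simp only [dI] at heq
    omega

lemma topcell_of (hanti : Antitone l) (hLz : ∀ m, m < L ↔ 0 < l m)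
    {i : ℕ} {c : ℤ} (hc : ∀ a, dI l a ≠ c) (hci : c < dI l i) :
    ∃ a b : ℕ, i ≤ a ∧ a < L ∧ IsTopCell l a b ∧ (b:ℤ) - a = c := by
  have hex := exists_dle hanti c
  set q := Nat.find hex with hqdef
  have hq : dI l q ≤ c := Nat.find_spec hex
  have hiq : i < q := by
    rw [hqdef, Nat.lt_find_iff]
    intro m hm hP
    have h1 := dI_add_le hanti hm
    simp only [dI] at h1 hP hci
    omega
  have hca : c < dI l (q-1) := lt_of_not_ge (Nat.find_min hex (by omega))
  have hb0 : 0 ≤ c + ((q - 1 : ℕ) : ℤ) := by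
    by_cases hc0 : 0 ≤ c
    · have h2 : (0:ℤ) ≤ ((q-1:ℕ):ℤ) := Int.natCast_nonneg _
      omega
    · have h2 : (-c).toNat < q := by
        rw [hqdef, Nat.lt_find_iff]
        intro m hm hP
        have h3 := hc m
        simp only [dI] at hP h3
        omega
      omega
  refine ⟨q - 1, (c + ((q-1:ℕ):ℤ)).toNat, by omega, ?_, ⟨?_, ?_⟩, ?_⟩
  · refine (hLz _).2 ?_
    simp only [dI] at hca
    omega
  · simp only [dI] at hca
    omega
  · have hq2 : q - 1 + 1 = q := by omega
    rw [hq2]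
    have h3 := hc q
    simp only [dI] at hq h3
    omega
  · simp only [dI] at hca
    omega

lemma climb (hcore : IsCore k l) (hLz : ∀ m, m < L ↔ 0 < l m) {i : ℕ} :
    ∀ n : ℕ, ∀ c : ℤ, (dI l i - c).toNat ≤ n → c < dI l i → (∀ a, dI l a ≠ c) →
    ∃ c' : ℤ, (dI l i - (k+1) ≤ c' ∧ c' ≤ dI l i - 1) ∧ (∀ a, dI l a ≠ c') ∧
      ((c' : ZMod (k+1)) = (c : ZMod (k+1))) := by
  intro n
  induction n with
  | zero => intro c hn h1 h2; exfalso; omega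
  | succ n ih =>
    intro c hn h1 h2
    by_cases hw : dI l i - (k+1) ≤ c
    · exact ⟨c, ⟨hw, by omega⟩, h2, rfl⟩
    · have h1' : c + (k+1) < dI l i := by omega
      have h2' : ∀ a, dI l a ≠ c + (k+1) := by
        intro a ha
        obtain ⟨b, hb⟩ := core_closed hcore hLz ⟨a, ha⟩
        exact h2 b (by omega)
      obtain ⟨c', hA, hB, hC⟩ := ih (c + (k+1)) (by omega) h1' h2'
      refine ⟨c', hA, hB, ?_⟩
      rw [hC]
      have hz : ((k+1 : ℕ) : ZMod (k+1)) = 0 := ZMod.natCast_self _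
      push_cast at hz ⊢
      linear_combination hz

lemma content_spec (hanti : Antitone l) {i a b : ℕ} (hia : i ≤ a) (htop : IsTopCell l a b) :
    ((b:ℤ) - a < dI l i) ∧ ∀ a', dI l a' ≠ (b:ℤ) - a := by
  obtain ⟨hb, hb2⟩ := htop
  constructor
  · have h1 := dI_add_le hanti hia
    simp only [dI] at h1 ⊢; omega
  · intro a' heq
    by_cases h : a' ≤ a
    · have h1 := dI_add_le hanti h
      simp only [dI] at h1 heq; omega
    · have h1 := dI_add_le hanti (show a + 1 ≤ a' by omega)
      simp only [dI] at h1 heq; omega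

lemma mcol_anti {j1 j2 : ℕ} (h : j1 ≤ j2) : mcol l L j2 ≤ mcol l L j1 := by
  refine Finset.card_le_card ?_
  intro x hx
  simp only [Finset.mem_filter, Finset.mem_range] at hx ⊢
  exact ⟨hx.1, by omega⟩

end Aux

/-- if the `(k+1)`-core `l` has exactly `L` nonempty rows and `lam = p(l)`,
then for each row `i < L`, the number of distinct `(k+1)`-residues among the top cells of
`l` lying in rows `i, …, L-1` equals `lam i`. -/
theorem card_residues_topcells_eq_pMap
    (k : ℕ) (hk : 1 ≤ k) (l : ℕ → ℕ) (hcore : IsCore k l)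
    (L : ℕ) (hL : ∀ m, m < L ↔ 0 < l m) (i : ℕ) (hi : i < L) :
    Nat.card {r : ZMod (k + 1) //
        ∃ a b, i ≤ a ∧ a < L ∧ IsTopCell l a b ∧ residue k a b = r} = pMap k l i := by
  classical
  have hanti : Antitone l := hcore.1.1
  have hLz := hL
  set T : Finset ℤ :=
    (Finset.Icc (dI l i - (k+1)) (dI l i - 1)).filter (fun c => ∀ a, dI l a ≠ c) with hTdef
  have hTmem : ∀ c : ℤ,
      c ∈ T ↔ (dI l i - (k+1) ≤ c ∧ c ≤ dI l i - 1) ∧ ∀ a, dI l a ≠ c := by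
    intro c
    simp [hTdef, Finset.mem_filter, Finset.mem_Icc]
  have hstep1 : Nat.card {r : ZMod (k + 1) //
      ∃ a b, i ≤ a ∧ a < L ∧ IsTopCell l a b ∧ residue k a b = r} = T.card := by
    have hset : {r : ZMod (k+1) | ∃ a b, i ≤ a ∧ a < L ∧ IsTopCell l a b ∧ residue k a b = r}
        = (fun c : ℤ => ((c : ZMod (k+1)))) '' ↑T := by
      ext r
      simp only [Set.mem_setOf_eq, Set.mem_image, Finset.mem_coe]
      constructor
      · rintro ⟨a, b, hia, haL, htop, hres⟩
        obtain ⟨hlt, hD⟩ := content_spec hanti hia htop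
        obtain ⟨c', hw, hD', hc⟩ :=
          climb hcore hLz ((dI l i - ((b:ℤ)-a)).toNat) ((b:ℤ)-a) le_rfl hlt hD
        refine ⟨c', (hTmem c').2 ⟨⟨hw.1, hw.2⟩, hD'⟩, ?_⟩
        rw [hc, ← hres]
        simp only [residue]
        push_cast
        ring
      · rintro ⟨c, hcT, rfl⟩
        obtain ⟨⟨hw1, hw2⟩, hD⟩ := (hTmem c).1 hcT
        obtain ⟨a, b, hia, haL, htop, hba⟩ := topcell_of hanti hLz (i := i) hD (by omega)
        refine ⟨a, b, hia, haL, htop, ?_⟩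
        simp only [residue]
        rw [← hba]
        push_cast
        ring
    have hinj : Set.InjOn (fun c : ℤ => ((c : ZMod (k+1)))) ↑T := by
      intro c1 h1 c2 h2 hcc
      obtain ⟨⟨ha1, hb1⟩, _⟩ := (hTmem c1).1 h1
      obtain ⟨⟨ha2, hb2⟩, _⟩ := (hTmem c2).1 h2
      have hmod : c1 ≡ c2 [ZMOD (k+1)] := (ZMod.intCast_eq_intCast_iff _ _ _).1 hcc
      have hdvd : ((k+1:ℕ) : ℤ) ∣ c2 - c1 := Int.ModEq.dvd hmod
      have hz : c2 - c1 = 0 := by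
        refine Int.eq_zero_of_abs_lt_dvd hdvd ?_
        rw [abs_lt]
        push_cast
        omega
      omega
    calc Nat.card {r : ZMod (k + 1) //
        ∃ a b, i ≤ a ∧ a < L ∧ IsTopCell l a b ∧ residue k a b = r}
        = Set.ncard {r : ZMod (k+1) |
            ∃ a b, i ≤ a ∧ a < L ∧ IsTopCell l a b ∧ residue k a b = r} :=
          Nat.card_coe_set_eq _
      _ = Set.ncard ((fun c : ℤ => ((c : ZMod (k+1)))) '' ↑T) := by rw [hset]
      _ = Set.ncard (↑T : Set ℤ) := Set.ncard_image_of_injOn hinj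
      _ = T.card := Set.ncard_coe_finset T
  have hstep2 : pMap k l i = T.card := by
    unfold pMap
    refine Finset.card_bij (fun j _ => (j:ℤ) + 1 - mcol l L j) ?_ ?_ ?_
    · intro j hj
      simp only [Finset.mem_filter, Finset.mem_range] at hj
      obtain ⟨hjl, hjk⟩ := hj
      have hhe := hook_eq_int hanti hLz hjl (L := L)
      have h1 : 1 ≤ hook l i j := by
        unfold hook
        omega
      show (j:ℤ) + 1 - mcol l L j ∈ T
      refine (hTmem _).2 ⟨⟨?_, ?_⟩, g_notin hanti hLz⟩ <;> omega
    · intro j1 hj1 j2 hj2 heq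
      have heq' : (j1:ℤ) + 1 - mcol l L j1 = (j2:ℤ) + 1 - mcol l L j2 := heq
      rcases Nat.lt_trichotomy j1 j2 with h | h | h
      · have hm := mcol_anti (l := l) (L := L) (Nat.le_of_lt h)
        omega
      · exact h
      · have hm := mcol_anti (l := l) (L := L) (Nat.le_of_lt h)
        omega
    · intro c hc
      obtain ⟨⟨hw1, hw2⟩, hD⟩ := (hTmem c).1 hc
      obtain ⟨j, hjl, hgj⟩ := exists_cell hanti hLz (i := i) hD (by omega)
      have hhe := hook_eq_int hanti hLz hjl (L := L)
      have hne : hook l i j ≠ k + 1 := hcore.2 i j hjl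
      have hjk : hook l i j ≤ k := by omega
      exact ⟨j, Finset.mem_filter.2 ⟨Finset.mem_range.2 hjl, hjk⟩, hgj⟩
  rw [hstep1, hstep2]
end

section
/- Let λ be a partition of d and let n ≥ 1. Then the set J = {α ∈ ℕ^n : α_1 + ⋯ + α_n = d and sort(α) ⊴ λ} is M-convex. -/
/-! Writing `f S = λ_1 + ⋯ + λ_{|S|}`, a vector `α` satisfies `sort(α) ⊴ λ` exactly when
`∑_{t ∈ S} α_t ≤ f S` for every `S ⊆ [n]`, and `f` is submodular because `λ` is weakly
decreasing. So `J` is the set of lattice points `α` with `|α| = d` under a submodular bound, and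
such a set is M-convex: given `α, β ∈ J` and `β_i < α_i`, let `U` be the largest set avoiding `i`
on which the bound is tight for `α` (tight sets are closed under union by submodularity).
Comparing `∑ α` and `∑ β` off `U` yields `j ∉ U` with `α_j < β_j`, and moving a unit from `i` to
`j` breaks no bound, since every set containing `j` but not `i` is slack. -/

open Finset

section Antitone

variable {β : ℕ → ℕ}

theorem sum_le_sum_range_card_of_antitone (hβ : Antitone β) (T : Finset ℕ) :
    ∑ t ∈ T, β t ≤ ∑ m ∈ range #T, β m := by
  induction T using Finset.induction_on_max with
  | empty => simp
  | insert a s hlt ih =>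
    have has : a ∉ s := fun h => lt_irrefl a (hlt a h)
    have hcard : #s ≤ a := by
      simpa using card_le_card (fun x hx => mem_range.mpr (hlt x hx) : s ⊆ range a)
    rw [sum_insert has, card_insert_of_notMem has, sum_range_succ]
    linarith [hβ hcard]

theorem sum_range_add_sum_range_le_of_antitone (hβ : Antitone β) {u a b s : ℕ}
    (hua : u ≤ a) (hub : u ≤ b) (h : u + s = a + b) :
    ∑ t ∈ range u, β t + ∑ t ∈ range s, β t ≤ ∑ t ∈ range a, β t + ∑ t ∈ range b, β t := by
  have hbs : b ≤ s := by omega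
  rw [← sum_range_add_sum_Ico β hua, ← sum_range_add_sum_Ico β hbs]
  have htail : ∑ t ∈ Ico b s, β t ≤ ∑ t ∈ Ico u a, β t := by
    rw [sum_Ico_eq_sum_range, sum_Ico_eq_sum_range, show s - b = a - u by omega]
    exact sum_le_sum fun k _ => hβ (by omega)
  omega

theorem sum_range_card_union_add_inter_le {ι : Type*} [DecidableEq ι] (hβ : Antitone β)
    (S T : Finset ι) :
    ∑ t ∈ range #(S ∪ T), β t + ∑ t ∈ range #(S ∩ T), β t ≤
      ∑ t ∈ range #S, β t + ∑ t ∈ range #T, β t := by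
  rw [add_comm]
  exact sum_range_add_sum_range_le_of_antitone hβ (card_le_card inter_subset_left)
    (card_le_card inter_subset_right) (by rw [add_comm, card_union_add_card_inter])

end Antitone

theorem exists_perm_antitone_comp {n : ℕ} (α : Fin n → ℕ) :
    ∃ σ : Equiv.Perm (Fin n), Antitone (α ∘ σ) :=
  ⟨Fin.revPerm.trans (Tuple.sort α), fun a b hab => by
    simpa using Tuple.monotone_sort α (Fin.rev_le_rev.mpr hab)⟩

section SortDominated

variable {n : ℕ} {α : Fin n → ℕ} {lam : ℕ → ℕ}

theorem SortDominatedBy.sum_le (h : SortDominatedBy n α lam) (S : Finset (Fin n)) :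
    ∑ t ∈ S, α t ≤ ∑ t ∈ range #S, lam t := by
  obtain ⟨β, hβ, -, ⟨σ, hσ⟩, hdom⟩ := h
  set e : Fin n → ℕ := fun t => σ.symm t
  have he : Set.InjOn e S := fun a _ b _ hab => σ.symm.injective (Fin.val_injective hab)
  calc ∑ t ∈ S, α t = ∑ m ∈ S.image e, β m := by
        rw [sum_image he]
        exact sum_congr rfl fun t _ => by simp [e, hσ]
    _ ≤ ∑ m ∈ range #(S.image e), β m := sum_le_sum_range_card_of_antitone hβ _
    _ ≤ ∑ t ∈ range #S, lam t := by rw [card_image_of_injOn he]; exact hdom _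

theorem sortDominatedBy_of_sum_le
    (h : ∀ S : Finset (Fin n), ∑ t ∈ S, α t ≤ ∑ t ∈ range #S, lam t) :
    SortDominatedBy n α lam := by
  obtain ⟨σ, hσ⟩ := exists_perm_antitone_comp α
  set β : ℕ → ℕ := fun m => if hm : m < n then α (σ ⟨m, hm⟩) else 0
  have hβ_zero : ∀ m, n ≤ m → β m = 0 := fun m hm => dif_neg (by omega)
  have hβ : Antitone β := by
    intro a b hab
    by_cases hb : b < n
    · simpa [β, hb, hab.trans_lt hb] using hσ (show (⟨a, _⟩ : Fin n) ≤ ⟨b, hb⟩ from hab)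
    · simp [hβ_zero b (by omega)]
  refine ⟨β, hβ, hβ_zero, ⟨σ, fun i => by simp [β]⟩, fun k => ?_⟩
  have hk : min k n ≤ n := min_le_right k n
  let S : Finset (Fin n) := univ.map ((Fin.castLEEmb hk).trans σ.toEmbedding)
  calc ∑ t ∈ range k, β t = ∑ t ∈ range (min k n), β t :=
        (sum_subset (range_subset_range.mpr (min_le_left k n)) fun m hmk hm =>
          hβ_zero m (by simp at hmk hm; omega)).symm
    _ = ∑ t ∈ S, α t := by
        rw [sum_range, sum_map]
        exact sum_congr rfl fun m _ => dif_pos _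
    _ ≤ ∑ t ∈ range (min k n), lam t := by simpa [S] using h S
    _ ≤ ∑ t ∈ range k, lam t := sum_le_sum_of_subset (range_subset_range.mpr (min_le_left k n))

theorem sortDominatedBy_iff :
    SortDominatedBy n α lam ↔ ∀ S : Finset (Fin n), ∑ t ∈ S, α t ≤ ∑ t ∈ range #S, lam t :=
  ⟨SortDominatedBy.sum_le, sortDominatedBy_of_sum_le⟩

end SortDominated

section Exchange

variable {ι : Type*} [DecidableEq ι]

theorem sum_exchange_add_ite {α : ι → ℕ} {i j : ι} (hij : i ≠ j) (hi : 0 < α i)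
    (S : Finset ι) :
    ∑ t ∈ S, (if t = i then α t - 1 else if t = j then α t + 1 else α t) +
        (if i ∈ S then 1 else 0) =
      ∑ t ∈ S, α t + (if j ∈ S then 1 else 0) := by
  rw [← sum_ite_eq' S i (fun _ => 1), ← sum_ite_eq' S j (fun _ => 1), ← sum_add_distrib,
    ← sum_add_distrib]
  refine sum_congr rfl fun t _ => ?_
  by_cases hti : t = i
  · subst hti; simp [hij]; omega
  · by_cases htj : t = j <;> simp [hti, htj, hij.symm]

theorem exists_notMem_lt_of_sum_eq [Fintype ι] {α β : ι → ℕ} {U : Finset ι} {i : ι}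
    (hsum : ∑ t, α t = ∑ t, β t) (hU : ∑ t ∈ U, β t ≤ ∑ t ∈ U, α t) (hiU : i ∉ U)
    (hi : β i < α i) : ∃ j ∉ U, α j < β j := by
  by_contra! hle
  have hlt : ∑ t ∈ Uᶜ, β t < ∑ t ∈ Uᶜ, α t :=
    sum_lt_sum (fun t ht => hle t (mem_compl.mp ht)) ⟨i, mem_compl.mpr hiU, hi⟩
  rw [← sum_add_sum_compl U, ← sum_add_sum_compl U β] at hsum
  omega

end Exchange

section Submodular

variable {n : ℕ} {f : Finset (Fin n) → ℕ} {α : Fin n → ℕ}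

theorem sum_union_eq_of_submodular (hf : ∀ S T, f (S ∪ T) + f (S ∩ T) ≤ f S + f T)
    (hα : ∀ S, ∑ t ∈ S, α t ≤ f S) {S T : Finset (Fin n)}
    (hS : ∑ t ∈ S, α t = f S) (hT : ∑ t ∈ T, α t = f T) :
    ∑ t ∈ S ∪ T, α t = f (S ∪ T) := by
  have := sum_union_inter (s₁ := S) (s₂ := T) (f := α)
  linarith [hf S T, hα (S ∪ T), hα (S ∩ T)]

theorem exists_maximal_tight_notMem (hf0 : f ∅ = 0)
    (hf : ∀ S T, f (S ∪ T) + f (S ∩ T) ≤ f S + f T) (hα : ∀ S, ∑ t ∈ S, α t ≤ f S)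
    (i : Fin n) :
    ∃ U, i ∉ U ∧ ∑ t ∈ U, α t = f U ∧ ∀ S, i ∉ S → ∑ t ∈ S, α t = f S → S ⊆ U := by
  let tight := univ.filter fun S : Finset (Fin n) => i ∉ S ∧ ∑ t ∈ S, α t = f S
  refine ⟨tight.sup id, ?_, ?_, fun S hiS hS => le_sup (f := id) (by simp [tight, hiS, hS])⟩
  · simp only [mem_sup, id]
    rintro ⟨S, hS, hiS⟩
    exact (mem_filter.mp hS).2.1 hiS
  · refine sup_induction (p := fun S => ∑ t ∈ S, α t = f S) (by simp [hf0])
      (fun S hS T hT => sum_union_eq_of_submodular hf hα hS hT) fun S hS => ?_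
    exact (mem_filter.mp hS).2.2

theorem mConvex_of_submodular (d : ℕ) (hf0 : f ∅ = 0)
    (hf : ∀ S T, f (S ∪ T) + f (S ∩ T) ≤ f S + f T) :
    MConvex {α : Fin n → ℕ | ∑ t, α t = d ∧ ∀ S, ∑ t ∈ S, α t ≤ f S} := by
  rintro α ⟨hαd, hα⟩ β ⟨hβd, hβ⟩ i hi
  obtain ⟨U, hiU, hUα, hUmax⟩ := exists_maximal_tight_notMem hf0 hf hα i
  obtain ⟨j, hjU, hj⟩ :=
    exists_notMem_lt_of_sum_eq (hαd.trans hβd.symm) (hUα ▸ hβ U) hiU hi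
  have hij : i ≠ j := by rintro rfl; omega
  have hexch := sum_exchange_add_ite hij (by omega : 0 < α i)
  refine ⟨j, hj, ?_, fun S => ?_⟩
  · simpa [hαd] using hexch univ
  · beta_reduce
    have hαS := hα S
    have hS := hexch S
    by_cases hiS : i ∈ S
    · simp only [hiS, if_true] at hS; split_ifs at hS <;> omega
    by_cases hjS : j ∈ S
    · have hslack : ∑ t ∈ S, α t ≠ f S := fun h => hjU (hUmax S hiS h hjS)
      simp only [hiS, hjS, if_true, if_false] at hS; omega
    · simp only [hiS, hjS, if_false] at hS; omega

end Submodular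

theorem MConvex_sort_dominated_general
    (d n : ℕ) (lam : ℕ → ℕ) (hlam : IsPartitionOf d lam) :
    MConvex {α : Fin n → ℕ | (∑ i, α i) = d ∧ SortDominatedBy n α lam} := by
  simp_rw [sortDominatedBy_iff]
  exact mConvex_of_submodular d (by simp) (sum_range_card_union_add_inter_le hlam.1)

/-- for a partition `lam` of `d` and `n ≥ 1`, the set of `α ∈ ℕ^n` with
`|α| = d` and `sort(α) ⊴ lam` is M-convex. -/
theorem MConvex_sort_dominated
    (d n : ℕ) (hn : 1 ≤ n) (lam : ℕ → ℕ) (hlam : IsPartitionOf d lam) :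
    MConvex {α : Fin n → ℕ | (∑ i, α i) = d ∧ SortDominatedBy n α lam} :=
  MConvex_sort_dominated_general d n lam hlam
end
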